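/- arXiv:0705.4131 — 8 statements merged into one kernel-verified Lean document; each statement's English description precedes it below -/
import Mathlib

section
/- Let B_I be the Boolean algebra freely generated by elements ⟨e_t : t ∈ I⟩. Then B_I satisfies the countable chain condition: every family of pairwise disjoint nonzero elements of B_I is countable. -/
open Set

/-- `x` belongs to the Boolean subalgebra generated by `s`. -/
def MemSub {B : Type*} [BooleanAlgebra B] (s : Set B) (x : B) : Prop :=
  ∀ t : Set B, s ⊆ t → ⊤ ∈ t → (∀ a ∈ t, aᶜ ∈ t) →
    (∀ a ∈ t, ∀ b ∈ t, a ⊔ b ∈ t) → x ∈ t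

namespace CCCAux

variable {ι B : Type*} [BooleanAlgebra B] [DecidableEq ι]

/-- The elementary element determined by `u ⊆ s`. -/
def eps (e : ι → B) (s u : Finset ι) : B :=
  u.inf e ⊓ (s \ u).inf fun t => (e t)ᶜ

variable (e : ι → B)

lemma eps_pos (hfree : ∀ u v : Finset ι, Disjoint u v →
      ⊥ < u.inf e ⊓ v.inf fun t => (e t)ᶜ) (s u : Finset ι) :
    ⊥ < eps e s u :=
  hfree u (s \ u) Finset.disjoint_sdiff

lemma eps_le_gen {s u : Finset ι} {t : ι} (ht : t ∈ u) : eps e s u ≤ e t :=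
  le_trans inf_le_left (Finset.inf_le ht)

lemma eps_le_compl {s u : Finset ι} {t : ι} (ht : t ∈ s) (ht' : t ∉ u) :
    eps e s u ≤ (e t)ᶜ :=
  le_trans inf_le_right (Finset.inf_le (Finset.mem_sdiff.mpr ⟨ht, ht'⟩))

lemma eps_disj_aux {s u u' : Finset ι} {t : ι} (htu : t ∈ u) (htu' : t ∉ u')
    (hts : t ∈ s) : Disjoint (eps e s u) (eps e s u') :=
  (disjoint_compl_right (a := e t)).mono (eps_le_gen e htu) (eps_le_compl e hts htu')

lemma eps_disj {s u u' : Finset ι} (hu : u ⊆ s) (hu' : u' ⊆ s) (hne : u ≠ u') :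
    Disjoint (eps e s u) (eps e s u') := by
  have : ∃ t, (t ∈ u ∧ t ∉ u') ∨ (t ∈ u' ∧ t ∉ u) := by
    by_contra h
    push_neg at h
    exact hne (Finset.ext fun t => ⟨fun ht => (h t).1 ht, fun ht => (h t).2 ht⟩)
  obtain ⟨t, ⟨h1, h2⟩ | ⟨h1, h2⟩⟩ := this
  · exact eps_disj_aux e h1 h2 (hu h1)
  · exact (eps_disj_aux e h1 h2 (hu' h1)).symm

lemma eps_insert {s u : Finset ι} {a : ι} (ha : a ∉ s) (hu : u ⊆ s) :
    eps e (insert a s) u ⊔ eps e (insert a s) (insert a u) = eps e s u := by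
  have hau : a ∉ u := fun h => ha (hu h)
  have h1 : insert a s \ u = insert a (s \ u) := by
    ext x
    simp only [Finset.mem_sdiff, Finset.mem_insert]
    constructor
    · rintro ⟨h | h, h'⟩
      · exact Or.inl h
      · exact Or.inr ⟨h, h'⟩
    · rintro (rfl | ⟨h, h'⟩)
      · exact ⟨Or.inl rfl, hau⟩
      · exact ⟨Or.inr h, h'⟩
  have h2 : insert a s \ insert a u = s \ u := by
    ext x
    simp only [Finset.mem_sdiff, Finset.mem_insert, not_or]
    constructor
    · rintro ⟨h | h, h', h''⟩
      · exact absurd h h'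
      · exact ⟨h, h''⟩
    · rintro ⟨h, h'⟩
      exact ⟨Or.inr h, fun hxa => ha (hxa ▸ h), h'⟩
  simp only [eps, h1, h2, Finset.inf_insert]
  have e1 : u.inf e ⊓ ((e a)ᶜ ⊓ (s \ u).inf fun t => (e t)ᶜ) =
      (u.inf e ⊓ (s \ u).inf fun t => (e t)ᶜ) ⊓ (e a)ᶜ := by ac_rfl
  have e2 : (e a ⊓ u.inf e) ⊓ ((s \ u).inf fun t => (e t)ᶜ) =
      (u.inf e ⊓ (s \ u).inf fun t => (e t)ᶜ) ⊓ e a := by ac_rfl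
  rw [e1, e2, ← inf_sup_left, compl_sup_eq_top, inf_top_eq]

lemma sup_eps_top (s : Finset ι) : s.powerset.sup (eps e s) = ⊤ := by
  induction s using Finset.induction with
  | empty => simp [eps]
  | @insert a s ha ih =>
    rw [Finset.powerset_insert, Finset.sup_union, Finset.sup_image, ← ih]
    rw [← Finset.sup_sup]
    exact Finset.sup_congr rfl fun u hu =>
      eps_insert e ha (Finset.mem_powerset.mp hu)

/-- `x` is represented over `s` by the family `f` of subsets of `s`. -/
def Rep (s : Finset ι) (f : Finset (Finset ι)) (x : B) : Prop :=
  f ⊆ s.powerset ∧ x = f.sup (eps e s)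

lemma rep_insert {s : Finset ι} {f : Finset (Finset ι)} {x : B} {a : ι}
    (ha : a ∉ s) (h : Rep e s f x) :
    Rep e (insert a s) (f ∪ f.image (insert a)) x ∧
      (f ∪ f.image (insert a)).card = 2 * f.card := by
  obtain ⟨hf, hx⟩ := h
  have hsub : ∀ u ∈ f, u ⊆ s := fun u hu => Finset.mem_powerset.mp (hf hu)
  constructor
  · constructor
    · intro u hu
      rw [Finset.mem_union] at hu
      rcases hu with hu | hu
      · exact Finset.mem_powerset.mpr ((hsub u hu).trans (Finset.subset_insert a s))
      · obtain ⟨v, hv, rfl⟩ := Finset.mem_image.mp hu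
        exact Finset.mem_powerset.mpr (Finset.insert_subset_insert a (hsub v hv))
    · rw [Finset.sup_union, Finset.sup_image, ← Finset.sup_sup, hx]
      exact (Finset.sup_congr rfl fun u hu => (eps_insert e ha (hsub u hu))).symm
  · rw [Finset.card_union_of_disjoint, Finset.card_image_of_injOn]
    · ring
    · intro u hu v hv huv
      have hu' : a ∉ u := fun h => ha (hsub u hu h)
      have hv' : a ∉ v := fun h => ha (hsub v hv h)
      have := congrArg (fun w => Finset.erase w a) huv
      simpa [Finset.erase_insert hu', Finset.erase_insert hv'] using this
    · rw [Finset.disjoint_left]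
      intro u hu hu'
      obtain ⟨v, hv, rfl⟩ := Finset.mem_image.mp hu'
      exact ha (hsub _ hu (Finset.mem_insert_self a v))

lemma rep_superset {s s' : Finset ι} {f : Finset (Finset ι)} {x : B}
    (hss : s ⊆ s') (h : Rep e s f x) :
    ∃ f', Rep e s' f' x ∧ f'.card = f.card * 2 ^ (s'.card - s.card) := by
  have key : ∀ t : Finset ι, Disjoint t s →
      ∃ f', Rep e (t ∪ s) f' x ∧ f'.card = f.card * 2 ^ t.card := by
    intro t
    induction t using Finset.induction with
    | empty => intro _; exact ⟨f, by simpa using h, by simp⟩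
    | @insert a t ha ih =>
      intro hdisj
      obtain ⟨f'', hf'', hcard⟩ := ih (hdisj.mono_left (Finset.subset_insert a t))
      have ha' : a ∉ t ∪ s := by
        simp only [Finset.mem_union, not_or]
        exact ⟨ha, Finset.disjoint_left.mp hdisj (Finset.mem_insert_self a t)⟩
      obtain ⟨hrep, hc⟩ := rep_insert e ha' hf''
      refine ⟨_, by rwa [Finset.insert_union] , ?_⟩
      rw [hc, hcard, Finset.card_insert_of_notMem ha, pow_succ]
      ring
  obtain ⟨f', hf', hcard⟩ := key (s' \ s) Finset.sdiff_disjoint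
  rw [Finset.sdiff_union_of_subset hss] at hf'
  rw [Finset.card_sdiff_of_subset hss] at hcard
  exact ⟨f', hf', hcard⟩

lemma exists_rep (hgen : ∀ x : B, MemSub (Set.range e) x) (x : B) :
    ∃ s f, Rep e s f x := by
  refine hgen x {y | ∃ s f, Rep e s f y} ?_ ?_ ?_ ?_
  · rintro _ ⟨t, rfl⟩
    refine ⟨{t}, {{t}}, by simp, ?_⟩
    simp [eps]
  · exact ⟨∅, {∅}, by simp, by simp [eps]⟩
  · rintro y ⟨s, f, hf, hy⟩
    refine ⟨s, s.powerset \ f, Finset.sdiff_subset, ?_⟩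
    have hcod : y ⊔ (s.powerset \ f).sup (eps e s) = ⊤ := by
      rw [hy, ← Finset.sup_union, Finset.union_sdiff_of_subset hf, sup_eps_top]
    have hdis : Disjoint y ((s.powerset \ f).sup (eps e s)) := by
      rw [hy, Finset.disjoint_sup_left]
      intro u hu
      rw [Finset.disjoint_sup_right]
      intro v hv
      refine eps_disj e (Finset.mem_powerset.mp (hf hu))
        (Finset.mem_powerset.mp (Finset.mem_sdiff.mp hv).1) ?_
      rintro rfl
      exact (Finset.mem_sdiff.mp hv).2 hu
    exact (IsCompl.of_eq (disjoint_iff.mp hdis) (codisjoint_iff.mp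
      (codisjoint_iff.mpr hcod))).compl_eq
  · rintro y ⟨s, f, hrep⟩ z ⟨s', f', hrep'⟩
    obtain ⟨g, hg, _⟩ := rep_superset e (Finset.subset_union_left (s₂ := s')) hrep
    obtain ⟨g', hg', _⟩ := rep_superset e (Finset.subset_union_right (s₁ := s)) hrep'
    refine ⟨s ∪ s', g ∪ g', Finset.union_subset hg.1 hg'.1, ?_⟩
    rw [Finset.sup_union, ← hg.2, ← hg'.2]

end CCCAux

/-- The free Boolean algebra `B_I` on generators `⟨e_t : t ∈ I⟩` (a Boolean algebra
generated by an independent family) satisfies the countable chain condition: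
every pairwise disjoint family of nonzero elements is countable. -/
theorem stmt2 (ι B : Type*) [BooleanAlgebra B] (e : ι → B)
    (hfree : ∀ u v : Finset ι, Disjoint u v →
      ⊥ < u.inf e ⊓ v.inf fun t => (e t)ᶜ)
    (hgen : ∀ x : B, MemSub (Set.range e) x)
    (A : Set B) (hA : ∀ a ∈ A, a ≠ ⊥)
    (hdisj : A.Pairwise fun a b => a ⊓ b = ⊥) :
    A.Countable := by
  classical
  open CCCAux in
  -- choose a representation for every element
  have hrep : ∀ x : B, ∃ s f, Rep e s f x := exists_rep e hgen
  choose sx fx hx using hrep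
  -- the family is nonempty for nonzero elements
  have hne : ∀ a ∈ A, (fx a).Nonempty := by
    intro a ha
    rcases Finset.eq_empty_or_nonempty (fx a) with h | h
    · exact absurd (by simpa [h] using (hx a).2) (hA a ha)
    · exact h
  -- decompose A into countably many pieces
  have hsub : A ⊆ ⋃ n : ℕ, {a ∈ A | 2 ^ (sx a).card ≤ n * (fx a).card} := by
    intro a ha
    refine Set.mem_iUnion.mpr ⟨2 ^ (sx a).card, ha, ?_⟩
    have := (hne a ha).card_pos
    calc 2 ^ (sx a).card = 2 ^ (sx a).card * 1 := (mul_one _).symm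
      _ ≤ 2 ^ (sx a).card * (fx a).card := Nat.mul_le_mul_left _ this
  refine Set.Countable.mono hsub (Set.countable_iUnion fun n => Set.Finite.countable ?_)
  -- each piece is finite
  by_contra hinf
  rw [← Set.not_infinite, not_not] at hinf
  obtain ⟨F, hFsub, hFcard⟩ := hinf.exists_subset_card_eq (n + 1)
  -- common support
  set S : Finset ι := F.sup sx with hS
  have hsxS : ∀ a ∈ F, sx a ⊆ S := fun a ha => Finset.le_sup ha
  have key : ∀ a : B, a ∈ F → ∃ f', Rep e S f' a ∧
      f'.card = (fx a).card * 2 ^ (S.card - (sx a).card) := fun a ha =>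
    rep_superset e (hsxS a ha) (hx a)
  choose g hg hgcard using key
  -- the chosen families are pairwise disjoint
  have hgdisj : ∀ a : B, ∀ ha : a ∈ F, ∀ b : B, ∀ hb : b ∈ F, a ≠ b →
      Disjoint (g a ha) (g b hb) := by
    intro a ha b hb hab
    rw [Finset.disjoint_left]
    intro u hua hub
    have h1 : eps e S u ≤ a := (hg a ha).2 ▸ Finset.le_sup hua
    have h2 : eps e S u ≤ b := (hg b hb).2 ▸ Finset.le_sup hub
    have hAab : a ⊓ b = ⊥ := hdisj (hFsub ha).1 (hFsub hb).1 hab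
    have : eps e S u ≤ ⊥ := hAab ▸ le_inf h1 h2
    exact absurd (le_antisymm this bot_le) (ne_of_gt (eps_pos e hfree S u))
  -- counting
  have hsum : ∑ a ∈ F.attach, (g a.1 a.2).card ≤ 2 ^ S.card := by
    rw [← Finset.card_biUnion]
    · calc (F.attach.biUnion fun a => g a.1 a.2).card
          ≤ S.powerset.card := Finset.card_le_card (by
            intro u hu
            obtain ⟨a, _, hua⟩ := Finset.mem_biUnion.mp hu
            exact (hg a.1 a.2).1 hua)
        _ = 2 ^ S.card := Finset.card_powerset S
    · intro a _ b _ hab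
      exact hgdisj a.1 a.2 b.1 b.2 fun h => hab (Subtype.ext h)
  have hlower : ∀ a : B, ∀ ha : a ∈ F, 2 ^ S.card ≤ n * (g a ha).card := by
    intro a ha
    have h1 : 2 ^ (sx a).card ≤ n * (fx a).card := (hFsub ha).2
    have h2 : (sx a).card ≤ S.card := Finset.card_le_card (hsxS a ha)
    calc 2 ^ S.card = 2 ^ ((sx a).card + (S.card - (sx a).card)) := by
          rw [Nat.add_sub_cancel' h2]
      _ = 2 ^ (sx a).card * 2 ^ (S.card - (sx a).card) := pow_add 2 _ _
      _ ≤ n * (fx a).card * 2 ^ (S.card - (sx a).card) :=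
          Nat.mul_le_mul_right _ h1
      _ = n * (g a ha).card := by rw [hgcard a ha]; ring
  have hfinal : (n + 1) * 2 ^ S.card ≤ n * 2 ^ S.card := by
    calc (n + 1) * 2 ^ S.card = ∑ _a ∈ F.attach, 2 ^ S.card := by
          rw [Finset.sum_const, Finset.card_attach, hFcard, smul_eq_mul]
      _ ≤ ∑ a ∈ F.attach, n * (g a.1 a.2).card :=
          Finset.sum_le_sum fun a _ => hlower a.1 a.2
      _ = n * ∑ a ∈ F.attach, (g a.1 a.2).card := by rw [Finset.mul_sum]
      _ ≤ n * 2 ^ S.card := Nat.mul_le_mul_left _ hsum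
  have hpos : 0 < 2 ^ S.card := Nat.pow_pos (by norm_num)
  nlinarith
end

section
/- Let M be a model of a complete first-order theory T, let φ(x, ȳ) be a formula, and let ⟨b̄_t : t ∈ I⟩ be tuples in M such that ⟨φ(x, b̄_t) : t ∈ I⟩ is an independent sequence of formulas. Let B^c_I be the completion of the free Boolean algebra on generators ⟨e_t : t ∈ I⟩. Then there is a function F from the set of ȳ-tuples of M to B^c_I such that F(b̄_t) = e_t for all t ∈ I, and for every ultrafilter D of B^c_I the set {φ(x, b̄) : F(b̄) ∈ D} ∪ {¬φ(x, b̄) : F(b̄) ∉ D} is a consistent (finitely satisfiable in M) φ-type over M. -/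
open FirstOrder FirstOrder.Language Set

/-- `D` is an ultrafilter of the Boolean algebra `B`. -/
def IsUltra {B : Type*} [BooleanAlgebra B] (D : Set B) : Prop :=
  ⊤ ∈ D ∧ ⊥ ∉ D ∧ (∀ a ∈ D, ∀ b, a ≤ b → b ∈ D) ∧
    (∀ a ∈ D, ∀ b ∈ D, a ⊓ b ∈ D) ∧ ∀ a, a ∈ D ∨ aᶜ ∈ D

/-- A finite set covered by a chain of sets is covered by a single member. -/
lemma chain_finset_subset {α : Type*} {c : Set (Set α)}
    (hc : IsChain (· ⊆ ·) c) (hne : c.Nonempty) (s : Finset α)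
    (hs : ∀ a ∈ s, ∃ m ∈ c, a ∈ m) : ∃ m ∈ c, ∀ a ∈ s, a ∈ m := by
  classical
  induction s using Finset.induction_on with
  | empty => exact ⟨hne.choose, hne.choose_spec, fun a ha => absurd ha (Finset.notMem_empty a)⟩
  | @insert a s hnotmem ih =>
    obtain ⟨m₁, hm₁c, hm₁⟩ := ih (fun x hx => hs x (Finset.mem_insert_of_mem hx))
    obtain ⟨m₂, hm₂c, hm₂⟩ := hs a (Finset.mem_insert_self a s)
    rcases hc.total hm₁c hm₂c with h | h
    · exact ⟨m₂, hm₂c, fun x hx => by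
        rcases Finset.mem_insert.1 hx with rfl | hx
        · exact hm₂
        · exact h (hm₁ x hx)⟩
    · exact ⟨m₁, hm₁c, fun x hx => by
        rcases Finset.mem_insert.1 hx with rfl | hx
        · exact h hm₂
        · exact hm₁ x hx⟩

/-- Shelah [Sh:906], Claim 2.3: for a model `M ⊨ T` and an independent sequence of
formulas `⟨φ(x, b̄_t) : t ∈ I⟩`, there is a map `F` from `ȳ`-tuples of `M` into the
completion `B^c_I` of the free Boolean algebra (here: a complete Boolean algebra with
independent generators `e_t`) with `F(b̄_t) = e_t`, such that for every ultrafilter `D`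
of `B^c_I` the set `{φ(x,b̄) : F(b̄) ∈ D} ∪ {¬φ(x,b̄) : F(b̄) ∉ D}` is finitely
satisfiable in `M`, hence a consistent `φ`-type over `M`. -/
theorem stmt4 (L : Language) (T : L.Theory) (hT : T.IsComplete)
    (M : Type*) [L.Structure M] (hM : M ⊨ T)
    (β I : Type*) (φ : L.Formula (Unit ⊕ β)) (b : I → (β → M))
    (hind : ∀ u v : Finset I, Disjoint u v → ∃ x : M,
      (∀ t ∈ u, φ.Realize (Sum.elim (fun _ => x) (b t))) ∧
      (∀ t ∈ v, ¬ φ.Realize (Sum.elim (fun _ => x) (b t))))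
    (Bc : Type*) [CompleteBooleanAlgebra Bc] (e : I → Bc)
    (hfree : ∀ u v : Finset I, Disjoint u v →
      ⊥ < u.inf e ⊓ v.inf fun t => (e t)ᶜ) :
    ∃ F : (β → M) → Bc, (∀ t, F (b t) = e t) ∧
      ∀ D : Set Bc, IsUltra D →
        ∀ u v : Set (β → M), u.Finite → v.Finite →
          (∀ c ∈ u, F c ∈ D) → (∀ c ∈ v, F c ∉ D) →
          ∃ x : M, (∀ c ∈ u, φ.Realize (Sum.elim (fun _ => x) c)) ∧
            (∀ c ∈ v, ¬ φ.Realize (Sum.elim (fun _ => x) c)) := by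
  classical
  -- shorthand for realization
  set R : M → (β → M) → Prop := fun x c => φ.Realize (Sum.elim (fun _ => x) c) with hRdef
  -- b is injective (else hind is contradictory)
  by_cases hinj : ∀ t s : I, b t = b s → t = s
  swap
  · exfalso
    push_neg at hinj
    obtain ⟨t, s, hts, hne⟩ := hinj
    obtain ⟨x, hx1, hx2⟩ := hind {t} {s} (Finset.disjoint_singleton.2 hne)
    exact hx2 s (Finset.mem_singleton_self s)
      (hts ▸ hx1 t (Finset.mem_singleton_self t))
  -- the collection of "good" partial functions (as graphs)
  set P := (β → M) × Bc with hP
  set Coll : Set (Set P) := {S |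
    (∀ p ∈ S, ∀ q ∈ S, p.1 = q.1 → p.2 = q.2) ∧
    (∀ t, (b t, e t) ∈ S) ∧
    (∀ u v : Finset P, ↑u ⊆ S → ↑v ⊆ S →
      ⊥ < u.inf Prod.snd ⊓ v.inf (fun p => p.2ᶜ) →
      ∃ x : M, (∀ p ∈ u, R x p.1) ∧ (∀ p ∈ v, ¬ R x p.1))} with hColl
  -- the base: the graph of t ↦ e t
  have hbase : Set.range (fun t => ((b t, e t) : P)) ∈ Coll := by
    refine ⟨?_, ?_, ?_⟩
    · rintro p ⟨t, rfl⟩ q ⟨s, rfl⟩ h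
      simp only at h ⊢
      rw [hinj t s h]
    · exact fun t => ⟨t, rfl⟩
    · intro u v hu hv hW
      -- pick index for each pair
      have gu : ∀ p ∈ u, ∃ t, ((b t, e t) : P) = p := fun p hp => hu hp
      have gv : ∀ p ∈ v, ∃ t, ((b t, e t) : P) = p := fun p hp => hv hp
      set Pu : Finset I := u.attach.image (fun p => (gu p.1 p.2).choose) with hPu
      set Pv : Finset I := v.attach.image (fun p => (gv p.1 p.2).choose) with hPv
      have hPuS : ∀ t ∈ Pu, ((b t, e t) : P) ∈ u := by
        intro t ht
        obtain ⟨p, _, rfl⟩ := Finset.mem_image.1 ht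
        rw [(gu p.1 p.2).choose_spec]; exact p.2
      have hPvS : ∀ t ∈ Pv, ((b t, e t) : P) ∈ v := by
        intro t ht
        obtain ⟨p, _, rfl⟩ := Finset.mem_image.1 ht
        rw [(gv p.1 p.2).choose_spec]; exact p.2
      have hdisj : Disjoint Pu Pv := by
        rw [Finset.disjoint_left]
        intro t htu htv
        have h1 : u.inf Prod.snd ≤ e t := Finset.inf_le (hPuS t htu)
        have h2 : v.inf (fun p => p.2ᶜ) ≤ (e t)ᶜ := Finset.inf_le (f := fun p => p.2ᶜ) (hPvS t htv)
        have : u.inf Prod.snd ⊓ v.inf (fun p => p.2ᶜ) ≤ ⊥ := by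
          calc u.inf Prod.snd ⊓ v.inf (fun p => p.2ᶜ) ≤ e t ⊓ (e t)ᶜ := inf_le_inf h1 h2
          _ = ⊥ := inf_compl_eq_bot
        exact absurd (lt_of_lt_of_le hW this) (lt_irrefl ⊥)
      obtain ⟨x, hx1, hx2⟩ := hind Pu Pv hdisj
      refine ⟨x, ?_, ?_⟩
      · intro p hp
        obtain ⟨t, rfl⟩ := gu p hp
        have : t ∈ Pu := Finset.mem_image.2 ⟨⟨(b t, e t), hp⟩, Finset.mem_attach _ _, by
          have := (gu (b t, e t) hp).choose_spec
          exact hinj _ _ (congrArg Prod.fst this)⟩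
        exact hx1 t this
      · intro p hp
        obtain ⟨t, rfl⟩ := gv p hp
        have : t ∈ Pv := Finset.mem_image.2 ⟨⟨(b t, e t), hp⟩, Finset.mem_attach _ _, by
          have := (gv (b t, e t) hp).choose_spec
          exact hinj _ _ (congrArg Prod.fst this)⟩
        exact hx2 t this
  -- Zorn's lemma
  have hzorn : ∀ c ⊆ Coll, IsChain (· ⊆ ·) c → c.Nonempty →
      ∃ ub ∈ Coll, ∀ s ∈ c, s ⊆ ub := by
    intro c hcColl hchain hcne
    refine ⟨⋃₀ c, ⟨?_, ?_, ?_⟩, fun s hs => subset_sUnion_of_mem hs⟩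
    · rintro p ⟨S₁, hS₁, hp⟩ q ⟨S₂, hS₂, hq⟩ h
      rcases hchain.total hS₁ hS₂ with hle | hle
      · exact (hcColl hS₂).1 p (hle hp) q hq h
      · exact (hcColl hS₁).1 p hp q (hle hq) h
    · intro t
      obtain ⟨S, hS⟩ := hcne
      exact ⟨S, hS, (hcColl hS).2.1 t⟩
    · intro u v hu hv hW
      obtain ⟨m, hmc, hm⟩ := chain_finset_subset hchain hcne (u ∪ v) (by
        intro a ha
        rcases Finset.mem_union.1 ha with h | h
        · exact hu h
        · exact hv h)
      exact (hcColl hmc).2.2 u v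
        (fun p hp => hm p (Finset.mem_union_left _ hp))
        (fun p hp => hm p (Finset.mem_union_right _ hp)) hW
  obtain ⟨Smax, hSsub, hSmax⟩ := zorn_subset_nonempty Coll hzorn _ hbase
  obtain ⟨hfun, hgen, hgood⟩ := hSmax.prop
  -- Smax is total: every tuple is in its domain
  have htotal : ∀ c : β → M, ∃ z, (c, z) ∈ Smax := by
    intro c
    by_contra hc
    push_neg at hc
    -- the candidate value
    set TT : Set Bc := {w | ∃ u v : Finset P, ↑u ⊆ Smax ∧ ↑v ⊆ Smax ∧
      (¬ ∃ x : M, (∀ p ∈ u, R x p.1) ∧ (∀ p ∈ v, ¬ R x p.1) ∧ ¬ R x c) ∧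
      w = u.inf Prod.snd ⊓ v.inf (fun p => p.2ᶜ)} with hTT
    set Z : Bc := sSup TT with hZ
    have hnotmem : ((c, Z) : P) ∉ Smax := hc Z
    have hgood' : insert ((c, Z) : P) Smax ∈ Coll := by
      refine ⟨?_, ?_, ?_⟩
      · rintro p (rfl | hp) q (rfl | hq) h
        · rfl
        · exfalso
          apply hc q.2
          have h' : c = q.1 := h
          have hq' : ((c, q.2) : P) = q := by rw [h']
          rwa [hq']
        · exfalso
          apply hc p.2
          have h' : p.1 = c := h
          have hp' : ((c, p.2) : P) = p := by rw [← h']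
          rwa [hp']
        · exact hfun p hp q hq h
      · exact fun t => Set.mem_insert_of_mem _ (hgen t)
      · intro u v hu hv hW
        by_cases hcu : ((c, Z) : P) ∈ u
        · by_cases hcv : ((c, Z) : P) ∈ v
          · -- both: contradiction
            exfalso
            have h1 : u.inf Prod.snd ≤ Z := Finset.inf_le hcu
            have h2 : v.inf (fun p => p.2ᶜ) ≤ Zᶜ := Finset.inf_le (f := fun p => p.2ᶜ) hcv
            have : u.inf Prod.snd ⊓ v.inf (fun p => p.2ᶜ) ≤ ⊥ := by
              calc _ ≤ Z ⊓ Zᶜ := inf_le_inf h1 h2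
              _ = ⊥ := inf_compl_eq_bot
            exact absurd (lt_of_lt_of_le hW this) (lt_irrefl ⊥)
          · -- (c,Z) ∈ u only
            set u₀ : Finset P := u.erase (c, Z) with hu₀
            have hu₀S : ↑u₀ ⊆ Smax := by
              intro p hp
              rcases hu (Finset.erase_subset _ _ hp) with h | h
              · exact absurd (h ▸ Finset.mem_coe.1 hp) (Finset.notMem_erase _ _)
              · exact h
            have hvS : ↑v ⊆ Smax := by
              intro p hp
              rcases hv hp with h | h
              · exact absurd (h ▸ Finset.mem_coe.1 hp) hcv
              · exact h
            have huinf : u.inf Prod.snd = Z ⊓ u₀.inf Prod.snd := by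
              rw [hu₀, ← Finset.inf_insert (b := (c, Z)) (f := Prod.snd), Finset.insert_erase hcu]
            have hW' : ⊥ < Z ⊓ (u₀.inf Prod.snd ⊓ v.inf (fun p => p.2ᶜ)) := by
              rwa [huinf, inf_assoc] at hW
            rw [hZ, sSup_inf_eq] at hW'
            -- get a member of the sup-set
            have hex : ∃ w ∈ TT, w ⊓ (u₀.inf Prod.snd ⊓ v.inf (fun p => p.2ᶜ)) ≠ ⊥ := by
              by_contra hno
              push_neg at hno
              have : (⨆ w ∈ TT, w ⊓ (u₀.inf Prod.snd ⊓ v.inf (fun p => p.2ᶜ))) = ⊥ :=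
                le_antisymm (iSup₂_le fun w hw => (hno w hw).le) bot_le
              rw [this] at hW'
              exact absurd hW' (lt_irrefl ⊥)
            obtain ⟨w, hwT, hwne⟩ := hex
            have hwpos : ⊥ < w ⊓ (u₀.inf Prod.snd ⊓ v.inf (fun p => p.2ᶜ)) :=
              bot_lt_iff_ne_bot.2 hwne
            rw [hTT] at hwT
            obtain ⟨u₁, v₁, hu₁S, hv₁S, hunsat, rfl⟩ := hwT
            have hcomb : ⊥ < (u₁ ∪ u₀).inf Prod.snd ⊓ (v₁ ∪ v).inf (fun p => p.2ᶜ) := by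
              rw [Finset.inf_union, Finset.inf_union]
              calc ⊥ < (u₁.inf Prod.snd ⊓ v₁.inf (fun p => p.2ᶜ)) ⊓
                  (u₀.inf Prod.snd ⊓ v.inf (fun p => p.2ᶜ)) := hwpos
              _ = (u₁.inf Prod.snd ⊓ u₀.inf Prod.snd) ⊓
                  (v₁.inf (fun p => p.2ᶜ) ⊓ v.inf (fun p => p.2ᶜ)) := by
                    rw [inf_assoc, inf_assoc]
                    congr 1
                    rw [← inf_assoc, ← inf_assoc, inf_comm (v₁.inf _)]
            obtain ⟨x, hx1, hx2⟩ := hgood (u₁ ∪ u₀) (v₁ ∪ v)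
              (by rw [Finset.coe_union]; exact Set.union_subset hu₁S hu₀S)
              (by rw [Finset.coe_union]; exact Set.union_subset hv₁S hvS) hcomb
            have hxc : R x c := by
              by_contra hnxc
              exact hunsat ⟨x, fun p hp => hx1 p (Finset.mem_union_left _ hp),
                fun p hp => hx2 p (Finset.mem_union_left _ hp), hnxc⟩
            refine ⟨x, ?_, ?_⟩
            · intro p hp
              by_cases hpc : p = ((c, Z) : P)
              · rw [hpc]; exact hxc
              · exact hx1 p (Finset.mem_union_right _ (Finset.mem_erase.2 ⟨hpc, hp⟩))
            · exact fun p hp => hx2 p (Finset.mem_union_right _ hp)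
        · by_cases hcv : ((c, Z) : P) ∈ v
          · -- (c,Z) ∈ v only
            set v₀ : Finset P := v.erase (c, Z) with hv₀
            have hv₀S : ↑v₀ ⊆ Smax := by
              intro p hp
              rcases hv (Finset.erase_subset _ _ hp) with h | h
              · exact absurd (h ▸ Finset.mem_coe.1 hp) (Finset.notMem_erase _ _)
              · exact h
            have huS : ↑u ⊆ Smax := by
              intro p hp
              rcases hu hp with h | h
              · exact absurd (h ▸ Finset.mem_coe.1 hp) hcu
              · exact h
            have hvinf : v.inf (fun p => p.2ᶜ) = Zᶜ ⊓ v₀.inf (fun p => p.2ᶜ) := by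
              rw [hv₀, ← Finset.inf_insert (b := (c, Z)) (f := fun p => p.2ᶜ),
                Finset.insert_erase hcv]
            by_contra hnoreal
            push_neg at hnoreal
            -- then u.inf ⊓ v₀.infᶜ is a member of the sup-set, so ≤ Z
            have hmem : u.inf Prod.snd ⊓ v₀.inf (fun p => p.2ᶜ) ≤ Z := by
              refine le_sSup (show _ ∈ TT from ?_)
              rw [hTT]
              refine ⟨u, v₀, huS, hv₀S, ?_, rfl⟩
              rintro ⟨x, hx1, hx2, hxc⟩
              obtain ⟨p, hpv, hpR⟩ := hnoreal x hx1
              by_cases hpc : p = ((c, Z) : P)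
              · exact hxc (by rw [← show p.1 = c from congrArg Prod.fst hpc]; exact hpR)
              · exact hx2 p (Finset.mem_erase.2 ⟨hpc, hpv⟩) hpR
            have : u.inf Prod.snd ⊓ v.inf (fun p => p.2ᶜ) ≤ ⊥ := by
              rw [hvinf]
              calc u.inf Prod.snd ⊓ (Zᶜ ⊓ v₀.inf (fun p => p.2ᶜ))
                  = (u.inf Prod.snd ⊓ v₀.inf (fun p => p.2ᶜ)) ⊓ Zᶜ := by
                    rw [inf_comm Zᶜ, ← inf_assoc]
              _ ≤ Z ⊓ Zᶜ := inf_le_inf hmem le_rfl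
              _ = ⊥ := inf_compl_eq_bot
            exact absurd (lt_of_lt_of_le hW this) (lt_irrefl ⊥)
          · -- neither
            have huS : ↑u ⊆ Smax := fun p hp => (hu hp).resolve_left
              (fun h => hcu (h ▸ Finset.mem_coe.1 hp))
            have hvS : ↑v ⊆ Smax := fun p hp => (hv hp).resolve_left
              (fun h => hcv (h ▸ Finset.mem_coe.1 hp))
            exact hgood u v huS hvS hW
    exact hnotmem (hSmax.eq_of_subset hgood' (Set.subset_insert _ _) ▸
      Set.mem_insert _ _)
  -- define F
  choose F hF using htotal
  have hFb : ∀ t, F (b t) = e t := fun t => hfun _ (hF (b t)) _ (hgen t) rfl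
  refine ⟨F, hFb, ?_⟩
  intro D hD u v hufin hvfin huD hvD
  obtain ⟨hDtop, hDbot, hDup, hDinf, hDultra⟩ := hD
  -- finsets of pairs
  set uF : Finset P := hufin.toFinset.image (fun c => (c, F c)) with huF
  set vF : Finset P := hvfin.toFinset.image (fun c => (c, F c)) with hvF
  have huFS : ↑uF ⊆ Smax := by
    intro p hp
    obtain ⟨a, _, rfl⟩ := Finset.mem_image.1 (Finset.mem_coe.1 hp)
    exact hF a
  have hvFS : ↑vF ⊆ Smax := by
    intro p hp
    obtain ⟨a, _, rfl⟩ := Finset.mem_image.1 (Finset.mem_coe.1 hp)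
    exact hF a
  -- the witness element is in D, hence nonzero
  have hinfD : ∀ (s : Finset P) (f : P → Bc), (∀ p ∈ s, f p ∈ D) → s.inf f ∈ D := by
    intro s f
    induction s using Finset.induction_on with
    | empty => intro _; simpa using hDtop
    | @insert a s hnm ih =>
      intro h
      rw [Finset.inf_insert]
      exact hDinf _ (h a (Finset.mem_insert_self a s)) _
        (ih (fun p hp => h p (Finset.mem_insert_of_mem hp)))
  have hWD : uF.inf Prod.snd ⊓ vF.inf (fun p => p.2ᶜ) ∈ D := by
    refine hDinf _ (hinfD _ _ ?_) _ (hinfD _ _ ?_)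
    · intro p hp
      obtain ⟨a, ha, rfl⟩ := Finset.mem_image.1 hp
      exact huD a (hufin.mem_toFinset.1 ha)
    · intro p hp
      obtain ⟨a, ha, rfl⟩ := Finset.mem_image.1 hp
      rcases hDultra (F a) with h | h
      · exact absurd h (hvD a (hvfin.mem_toFinset.1 ha))
      · exact h
  have hWpos : ⊥ < uF.inf Prod.snd ⊓ vF.inf (fun p => p.2ᶜ) := by
    rcases (bot_le :  (⊥ : Bc) ≤ _).lt_or_eq with h | h
    · exact h
    · exact absurd (h ▸ hWD) hDbot
  obtain ⟨x, hx1, hx2⟩ := hgood uF vF huFS hvFS hWpos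
  refine ⟨x, ?_, ?_⟩
  · intro a ha
    exact hx1 (a, F a) (Finset.mem_image.2 ⟨a, hufin.mem_toFinset.2 ha, rfl⟩)
  · intro a ha
    exact hx2 (a, F a) (Finset.mem_image.2 ⟨a, hvfin.mem_toFinset.2 ha, rfl⟩)
end

section
/- Let μ be a cardinal with μ^ℵ₀ = μ. Then there is a family ⟨B_γ : γ < 2^μ⟩ of subsets of μ that is σ-independent: for all countable disjoint sets u, v ⊆ 2^μ, the set ⋂_{γ∈u} B_γ ∩ ⋂_{γ∈v} (μ \ B_γ) has cardinality μ. -/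
open Cardinal Set

universe u


lemma exists_enum {β : Type*} {s : Set β} (hs : s.Countable) :
    ∃ f : ℕ → Option β, ∀ b, b ∈ s ↔ some b ∈ Set.range f := by
  have h : (insert none (Option.some '' s) : Set (Option β)).Countable :=
    (hs.image _).insert _
  obtain ⟨f, hf⟩ := h.exists_eq_range ⟨none, Set.mem_insert _ _⟩
  refine ⟨f, fun b => ?_⟩
  rw [← hf]
  simp

def EKOmega (α : Type u) : Type u :=
  {p : Set α × Set (Set α) // p.1.Countable ∧ p.2.Countable ∧ ∀ s ∈ p.2, s ⊆ p.1}

open Classical in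
/-- The code of a subset `s` relative to an enumeration `g`. -/
noncomputable def EKcode {α : Type u} (g : ℕ → Option α) (s : Set α) : ℕ → Option α :=
  fun n => if ∃ a, g n = some a ∧ a ∈ s then g n else none

lemma EKcode_eq_some {α : Type u} {g : ℕ → Option α} {s : Set α} {n : ℕ} {a : α} :
    EKcode g s n = some a ↔ g n = some a ∧ a ∈ s := by
  unfold EKcode
  split
  · rename_i h
    obtain ⟨a', ha'1, ha'2⟩ := h
    rw [ha'1]
    constructor
    · intro h'
      obtain rfl : a' = a := Option.some.inj h'
      exact ⟨rfl, ha'2⟩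
    · exact fun hh => hh.1
  · rename_i h
    simp only [reduceCtorEq, false_iff]
    exact fun hh => h ⟨a, hh.1, hh.2⟩

lemma EKcode_injOn {α : Type u} {g : ℕ → Option α} {e : Set α}
    (hg : ∀ b, b ∈ e ↔ some b ∈ Set.range g) :
    Set.InjOn (EKcode g) {s : Set α | s ⊆ e} := by
  have aux : ∀ s t : Set α, s ⊆ e → EKcode g s = EKcode g t → ∀ a ∈ s, a ∈ t := by
    intro s t hs hst a ha
    obtain ⟨n, hn⟩ := (hg a).mp (hs ha)
    have h1 : EKcode g s n = some a := EKcode_eq_some.mpr ⟨hn, ha⟩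
    rw [hst] at h1
    exact (EKcode_eq_some.mp h1).2
  intro s hs t ht h
  exact Set.Subset.antisymm (fun a ha => aux s t hs h a ha) (fun a ha => aux t s ht h.symm a ha)

lemma mk_EKOmega_le {α : Type u} {μ : Cardinal.{u}} (hμ0 : ℵ₀ ≤ μ) (hμ : μ ^ ℵ₀ = μ)
    (hα : #α = μ) : #(EKOmega α) ≤ μ := by
  classical
  let enc : EKOmega α → (ℕ → Option α) × (ℕ → Option (ℕ → Option α)) :=
    fun p => ⟨(exists_enum p.2.1).choose,
      (exists_enum ((p.2.2.1).image (EKcode (exists_enum p.2.1).choose))).choose⟩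
  have hinj : Function.Injective enc := by
    intro p q h
    have h1 : (exists_enum p.2.1).choose = (exists_enum q.2.1).choose :=
      congrArg Prod.fst h
    have h2 : (exists_enum ((p.2.2.1).image (EKcode (exists_enum p.2.1).choose))).choose
        = (exists_enum ((q.2.2.1).image (EKcode (exists_enum q.2.1).choose))).choose :=
      congrArg Prod.snd h
    have hgp := (exists_enum p.2.1).choose_spec
    have hgq := (exists_enum q.2.1).choose_spec
    have hhp := (exists_enum ((p.2.2.1).image (EKcode (exists_enum p.2.1).choose))).choose_spec
    have hhq := (exists_enum ((q.2.2.1).image (EKcode (exists_enum q.2.1).choose))).choose_spec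
    -- first components equal
    have he : p.1.1 = q.1.1 := by
      ext b
      rw [hgp b, h1, ← hgq b]
    -- image sets equal
    have hS : EKcode (exists_enum p.2.1).choose '' p.1.2
        = EKcode (exists_enum q.2.1).choose '' q.1.2 := by
      ext b
      rw [hhp b, h2, ← hhq b]
    rw [← h1] at hS
    have hSS : p.1.2 = q.1.2 := by
      refine (EKcode_injOn (e := p.1.1) (hgp)).image_eq_image_iff ?_ ?_ |>.mp hS
      · exact p.2.2.2
      · intro s hs
        exact he ▸ q.2.2.2 s hs
    exact Subtype.ext (Prod.ext he hSS)
  have hle : #(EKOmega α) ≤ #((ℕ → Option α) × (ℕ → Option (ℕ → Option α))) :=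
    mk_le_of_injective hinj
  have c1 : #(ℕ → Option α) = μ := by
    rw [mk_arrow]
    simp only [mk_option, hα, lift_id, mk_nat, lift_aleph0, lift_uzero]
    rw [Cardinal.add_one_of_aleph0_le hμ0, hμ]
  have c2 : #(ℕ → Option (ℕ → Option α)) = μ := by
    rw [mk_arrow]
    simp only [mk_option, c1, lift_id, mk_nat, lift_aleph0, lift_uzero]
    rw [Cardinal.add_one_of_aleph0_le hμ0, hμ]
  calc #(EKOmega α) ≤ _ := hle
    _ = μ := by rw [mk_prod, c1, c2, lift_id]; exact Cardinal.mul_eq_self hμ0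

/-- Engelking–Karłowicz: if `μ^ℵ₀ = μ` then there is a σ-independent family of `2^μ`
subsets of a set of cardinality `μ`: every Boolean combination of countably many of
them has cardinality `μ`. -/
theorem stmt6 (μ : Cardinal.{u}) (hμ0 : ℵ₀ ≤ μ) (hμ : μ ^ ℵ₀ = μ)
    (α ι : Type u) (hα : #α = μ) (hι : #ι = 2 ^ μ) :
    ∃ B : ι → Set α,
      ∀ u v : Set ι, u.Countable → v.Countable → Disjoint u v →
        #({x : α | (∀ γ ∈ u, x ∈ B γ) ∧ ∀ γ ∈ v, x ∉ B γ} : Set α) = μ := by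
  classical
  -- basic cardinal facts
  have hcont : (2 : Cardinal.{u}) ^ (ℵ₀ : Cardinal.{u}) ≤ μ := by
    calc (2 : Cardinal.{u}) ^ (ℵ₀ : Cardinal.{u}) ≤ μ ^ (ℵ₀ : Cardinal.{u}) :=
          power_le_power_right (le_trans (by exact_mod_cast (Cardinal.nat_lt_aleph0 2).le) hμ0)
      _ = μ := hμ
  have hlt : (ℵ₀ : Cardinal.{u}) < μ := lt_of_lt_of_le (cantor ℵ₀) hcont
  haveI : Infinite α := by rw [Cardinal.infinite_iff, hα]; exact hμ0
  -- identify ι with Set α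
  have hsets : #ι = #(Set α) := by rw [hι, mk_set, hα]
  obtain ⟨G⟩ := Cardinal.eq.mp hsets
  -- injection of Ω into α
  obtain ⟨j⟩ := Cardinal.le_def _ _ |>.mp
    (show #(EKOmega α) ≤ #α by rw [hα]; exact mk_EKOmega_le hμ0 hμ hα)
  refine ⟨fun γ => j '' {ω : EKOmega α | G γ ∩ ω.1.1 ∈ ω.1.2}, ?_⟩
  intro u v hu hv huv
  -- separating countable set
  let d : ι → ι → Set α := fun γ γ' =>
    if h : (G γ \ G γ').Nonempty then {h.choose} else ∅
  have hd : ∀ γ γ', (d γ γ').Countable := by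
    intro γ γ'
    by_cases h : (G γ \ G γ').Nonempty <;> simp [d, h]
  let e₀ : Set α := ⋃ γ ∈ u ∪ v, ⋃ γ' ∈ u ∪ v, d γ γ'
  have he₀ : e₀.Countable :=
    (hu.union hv).biUnion fun γ _ => (hu.union hv).biUnion fun γ' _ => hd γ γ'
  have hdsub : ∀ γ ∈ u ∪ v, ∀ γ' ∈ u ∪ v, d γ γ' ⊆ e₀ := by
    intro γ hγ γ' hγ' x hx
    exact Set.mem_biUnion hγ (Set.mem_biUnion hγ' hx)
  have hsep : ∀ γ ∈ u, ∀ γ' ∈ v, ∀ e : Set α, e₀ ⊆ e → G γ ∩ e ≠ G γ' ∩ e := by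
    intro γ hγ γ' hγ' e he hEq
    have hne : G γ ≠ G γ' := by
      intro h
      obtain rfl := G.injective h
      exact Set.disjoint_left.mp huv hγ hγ'

    by_cases h1 : (G γ \ G γ').Nonempty
    · have hxe : h1.choose ∈ e := by
        refine he (hdsub γ (Set.mem_union_left _ hγ) γ' (Set.mem_union_right _ hγ') ?_)
        simp [d, h1]
      have hspec := h1.choose_spec
      have : h1.choose ∈ G γ' ∩ e := hEq ▸ ⟨hspec.1, hxe⟩
      exact hspec.2 this.1
    · have hsub : G γ ⊆ G γ' := by
        rw [← Set.diff_eq_empty]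
        exact Set.not_nonempty_iff_eq_empty.mp h1
      have h2 : (G γ' \ G γ).Nonempty := by
        rw [Set.nonempty_iff_ne_empty, Ne, Set.diff_eq_empty]
        exact fun h => hne (Set.Subset.antisymm hsub h)
      have hxe : h2.choose ∈ e := by
        refine he (hdsub γ' (Set.mem_union_right _ hγ') γ (Set.mem_union_left _ hγ) ?_)
        simp [d, h2]
      have hspec := h2.choose_spec
      have : h2.choose ∈ G γ ∩ e := hEq ▸ ⟨hspec.1, hxe⟩
      exact hspec.2 this.1
  -- the witnesses
  let ω : ↥e₀ᶜ → EKOmega α := fun a =>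
    ⟨⟨insert a.1 e₀, (fun γ => G γ ∩ insert a.1 e₀) '' u⟩,
      he₀.insert _, hu.image _, by rintro s ⟨γ, hγ, rfl⟩; exact Set.inter_subset_right⟩
  have hmem : ∀ a : ↥e₀ᶜ,
      j (ω a) ∈ {x : α | (∀ γ ∈ u, x ∈ j '' {ω : EKOmega α | G γ ∩ ω.1.1 ∈ ω.1.2})
        ∧ ∀ γ ∈ v, x ∉ j '' {ω : EKOmega α | G γ ∩ ω.1.1 ∈ ω.1.2}} := by
    intro a
    constructor
    · intro γ hγ
      exact ⟨ω a, ⟨γ, hγ, rfl⟩, rfl⟩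
    · rintro γ' hγ' ⟨ω', hω', hjω'⟩
      obtain rfl : ω' = ω a := j.injective hjω'
      obtain ⟨γ, hγ, heq⟩ := hω'
      exact hsep γ hγ γ' hγ' (insert a.1 e₀) (Set.subset_insert _ _) heq
  have hcompl : #(↥e₀ᶜ) = μ := by
    rw [← hα]
    exact mk_compl_of_infinite e₀
      (lt_of_le_of_lt (mk_le_aleph0_iff.mpr he₀.to_subtype) (by rwa [hα]))
  apply le_antisymm
  · rw [← hα]; exact mk_set_le _
  · rw [← hcompl]
    refine mk_le_of_injective (f := fun a => ⟨j (ω a), hmem a⟩) ?_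
    intro a b hab
    have hj : ω a = ω b := j.injective (congrArg Subtype.val hab)
    have h1 : insert a.1 e₀ = insert b.1 e₀ := congrArg (fun ω => ω.1.1) hj
    have : a.1 ∈ insert b.1 e₀ := h1 ▸ Set.mem_insert _ _
    rcases this with h | h
    · exact Subtype.ext h
    · exact absurd h a.2
end

section
/- Let μ be a cardinal with μ^ℵ₀ = μ and let A ⊆ μ with |A| = μ. Then there exist, for ξ < 2^(2^μ), families Ā^ξ = ⟨A^ξ_γ : γ < 2^μ⟩ of unbounded subsets of A such that: (i) for each ξ, the ℵ₁-complete filter D^ξ on μ generated by {A^ξ_γ \ β : γ < 2^μ, β < μ} is proper (∅ ∉ D^ξ); and (ii) for all ξ¹ ≠ ξ² < 2^(2^μ), the family {A \ A^{ξ¹}_γ : γ < 2^μ} is not contained in D^{ξ²} ∪ I^{ξ²}, where I^{ξ²} is the dual ideal of D^{ξ²}. -/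
open Cardinal Set

noncomputable section ShAux
namespace ShAux

variable {M : Type*}

/-- Point space for the σ-independent family. -/
abbrev Pt (M : Type*) := ((ℕ × ℕ) → M) × (ℕ → Set (ℕ × ℕ)) × M

/-- The σ-independent family on `Pt M`, indexed by `Set M`. -/
def B (S : Set M) : Set (Pt M) := {p | ∃ n, p.2.1 n = p.1 ⁻¹' S}

lemma exists_realizer [Nonempty M] (D : Set (Set M)) (hD : D.Countable)
    (ε : Set M → Bool) :
    ∃ f : (ℕ × ℕ) → M, ∃ g : ℕ → Set (ℕ × ℕ),
      ∀ S ∈ D, ((∃ n, g n = f ⁻¹' S) ↔ ε S = true) := by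
  classical
  rcases D.eq_empty_or_nonempty with rfl | hne
  · exact ⟨fun _ => Classical.arbitrary M, fun _ => ∅, fun S hS => hS.elim⟩
  obtain ⟨d, hd⟩ := hD.exists_eq_range hne
  set f : (ℕ × ℕ) → M := fun ij =>
    if h : (d ij.1 \ d ij.2).Nonempty then h.choose else Classical.arbitrary M with hf
  have hsep : ∀ i j : ℕ, f ⁻¹' (d i) = f ⁻¹' (d j) → d i = d j := by
    intro i j h
    by_contra hnedij
    have hcase : ¬ (d i ⊆ d j) ∨ ¬ (d j ⊆ d i) := by
      by_contra hh
      push_neg at hh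
      exact hnedij (subset_antisymm hh.1 hh.2)
    rcases hcase with hc | hc
    · have hdn : (d i \ d j).Nonempty := by
        obtain ⟨x, hx1, hx2⟩ := Set.not_subset.mp hc
        exact ⟨x, hx1, hx2⟩
      have hfm : f (i, j) ∈ d i \ d j := by
        simp only [hf, dif_pos hdn]
        exact hdn.choose_spec
      have h1 : (i, j) ∈ f ⁻¹' (d i) := hfm.1
      rw [h] at h1
      exact hfm.2 h1
    · have hdn : (d j \ d i).Nonempty := by
        obtain ⟨x, hx1, hx2⟩ := Set.not_subset.mp hc
        exact ⟨x, hx1, hx2⟩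
      have hfm : f (j, i) ∈ d j \ d i := by
        simp only [hf, dif_pos hdn]
        exact hdn.choose_spec
      have h1 : (j, i) ∈ f ⁻¹' (d j) := hfm.1
      rw [← h] at h1
      exact hfm.2 h1
  have hinj : ∀ S ∈ D, ∀ S' ∈ D, f ⁻¹' S = f ⁻¹' S' → S = S' := by
    intro S hS S' hS' h
    rw [hd] at hS hS'
    obtain ⟨i, rfl⟩ := hS
    obtain ⟨j, rfl⟩ := hS'
    exact hsep i j h
  have hTimg : ((fun S => f ⁻¹' S) '' D).Countable := hD.image _
  have hTne : ((fun S => f ⁻¹' S) '' D).Nonempty := hne.image _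
  obtain ⟨e, he⟩ := hTimg.exists_eq_range hTne
  set c : Set (ℕ × ℕ) := {p | p ∉ e p.1} with hc
  have hcnot : c ∉ (fun S => f ⁻¹' S) '' D := by
    intro hmem
    rw [he] at hmem
    obtain ⟨n, hn⟩ := hmem
    have h0 : (n, 0) ∈ c ↔ (n, 0) ∉ e n := Iff.rfl
    rw [hn] at h0
    exact (iff_not_self h0).elim
  set T : Set (Set (ℕ × ℕ)) := (fun S => f ⁻¹' S) '' {S ∈ D | ε S = true} with hT
  have hTc : (T ∪ {c}).Countable :=
    ((hD.mono (sep_subset _ _)).image _).union (countable_singleton c)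
  have hTcne : (T ∪ {c}).Nonempty := ⟨c, Or.inr rfl⟩
  obtain ⟨g, hg⟩ := hTc.exists_eq_range hTcne
  refine ⟨f, g, fun S hS => ?_⟩
  constructor
  · rintro ⟨n, hn⟩
    have hgn : g n ∈ T ∪ {c} := by rw [hg]; exact ⟨n, rfl⟩
    rcases hgn with hgn | hgn
    · obtain ⟨S', hS', hS'eq⟩ := hgn
      have hpre : f ⁻¹' S' = f ⁻¹' S := by
        rw [show f ⁻¹' S' = g n from hS'eq, hn]
      have : S' = S := hinj S' hS'.1 S hS hpre
      rw [← this]; exact hS'.2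
    · rw [mem_singleton_iff] at hgn
      exact (hcnot ⟨S, hS, show f ⁻¹' S = c by rw [← hn]; exact hgn⟩).elim
  · intro hε
    have : f ⁻¹' S ∈ T ∪ {c} := Or.inl ⟨S, ⟨hS, hε⟩, rfl⟩
    rw [hg] at this
    obtain ⟨n, hn⟩ := this
    exact ⟨n, hn⟩

end ShAux
end ShAux

/-- The ℵ₁-complete filter generated by the family `G` of sets: `X` belongs to it iff
`X` contains the intersection of countably many members of `G`. -/
def GenFilt (G : Set (Set Ordinal)) : Set (Set Ordinal) :=
  {X | ∃ C : Set (Set Ordinal), C ⊆ G ∧ C.Countable ∧ C.Nonempty ∧ ⋂₀ C ⊆ X}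

/-- Shelah [Sh:906], ⊙₁: for `μ = μ^ℵ₀` and `A ⊆ μ` of cardinality `μ`, there are
families `⟨A^ξ_γ : γ < 2^μ⟩` (for `ξ < 2^(2^μ)`) of unbounded subsets of `A` such that
each generated ℵ₁-complete filter `D^ξ` is proper, and for `ξ¹ ≠ ξ²` the family
`{A \ A^{ξ¹}_γ : γ < 2^μ}` is not contained in `D^{ξ²} ∪ I^{ξ²}` (where `I^{ξ²}` is
the dual ideal of `D^{ξ²}`). -/
theorem stmt7 (μ : Cardinal.{0}) (hμ0 : ℵ₀ ≤ μ) (hμ : μ ^ ℵ₀ = μ)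
    (A : Set Ordinal.{0}) (hA : A ⊆ Set.Iio μ.ord) (hAcard : #A = Cardinal.lift.{1} μ) :
    ∃ F : Ordinal → Ordinal → Set Ordinal,
      (∀ ξ < ((2 : Cardinal) ^ ((2 : Cardinal) ^ μ)).ord, ∀ γ < ((2 : Cardinal) ^ μ).ord,
        F ξ γ ⊆ A ∧ ∀ β < μ.ord, ∃ x ∈ F ξ γ, β < x) ∧
      (∀ ξ < ((2 : Cardinal) ^ ((2 : Cardinal) ^ μ)).ord,
        ∅ ∉ GenFilt {s | ∃ γ < ((2 : Cardinal) ^ μ).ord, ∃ β < μ.ord,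
          s = {x | x ∈ F ξ γ ∧ β ≤ x}}) ∧
      (∀ ξ₁ < ((2 : Cardinal) ^ ((2 : Cardinal) ^ μ)).ord,
       ∀ ξ₂ < ((2 : Cardinal) ^ ((2 : Cardinal) ^ μ)).ord, ξ₁ ≠ ξ₂ →
        ¬ (∀ γ < ((2 : Cardinal) ^ μ).ord,
          (A \ F ξ₁ γ) ∈ GenFilt {s | ∃ γ' < ((2 : Cardinal) ^ μ).ord, ∃ β < μ.ord,
              s = {x | x ∈ F ξ₂ γ' ∧ β ≤ x}} ∨
          (Set.Iio μ.ord \ (A \ F ξ₁ γ)) ∈ GenFilt {s | ∃ γ' < ((2 : Cardinal) ^ μ).ord,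
              ∃ β < μ.ord, s = {x | x ∈ F ξ₂ γ' ∧ β ≤ x}})) := by
  classical
  have hμne : μ ≠ 0 := (aleph0_pos.trans_le hμ0).ne'
  have hμ2 : (2 : Cardinal) ≤ μ := by exact_mod_cast (Cardinal.nat_lt_aleph0 2).le.trans hμ0
  have hAne : Nonempty ↥A := by
    rw [← mk_ne_zero_iff, hAcard]
    simpa using hμne
  -- cofinality of μ is uncountable
  have hcof : ℵ₀ < μ.ord.cof := by
    by_contra h
    push_neg at h
    have h1 : μ < μ ^ μ.ord.cof := Cardinal.lt_power_cof hμ0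
    have h2 : μ ^ μ.ord.cof ≤ μ ^ ℵ₀ := power_le_power_left hμne h
    rw [hμ] at h2
    exact absurd (h1.trans_le h2) (lt_irrefl μ)
  -- cardinality of point space
  have hPt : #(ShAux.Pt ↥A) = Cardinal.lift.{1} μ := by
    have hμ1 : ℵ₀ ≤ Cardinal.lift.{1} μ := by
      calc ℵ₀ = Cardinal.lift.{1} ℵ₀ := lift_aleph0.symm
        _ ≤ Cardinal.lift.{1} μ := lift_le.mpr hμ0
    have hpow : Cardinal.lift.{1} μ ^ (ℵ₀ : Cardinal.{1}) = Cardinal.lift.{1} μ := by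
      rw [← lift_aleph0.{1,0}, ← lift_power, hμ]
    have c1 : #((ℕ × ℕ) → ↥A) = Cardinal.lift.{1} μ := by
      rw [mk_arrow, hAcard, mk_eq_aleph0 (ℕ × ℕ)]
      simp only [lift_aleph0, Cardinal.lift_id']
      exact hpow
    have c2 : #(ℕ → Set (ℕ × ℕ)) ≤ μ := by
      rw [mk_arrow, mk_set, mk_eq_aleph0 (ℕ × ℕ)]
      simp only [lift_id, mk_nat]
      rw [← power_mul, aleph0_mul_aleph0]
      calc (2:Cardinal) ^ ℵ₀ ≤ μ ^ ℵ₀ := power_le_power_right hμ2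
        _ = μ := hμ
    apply le_antisymm
    · rw [show #(ShAux.Pt ↥A) = #(((ℕ × ℕ) → ↥A) × (ℕ → Set (ℕ × ℕ)) × ↥A) from rfl,
        mk_prod, mk_prod, c1, hAcard]
      simp only [Cardinal.lift_id', Cardinal.lift_id]
      calc Cardinal.lift.{1} μ * (Cardinal.lift.{1} #(ℕ → Set (ℕ × ℕ)) * Cardinal.lift.{1} μ)
          ≤ Cardinal.lift.{1} μ * (Cardinal.lift.{1} μ * Cardinal.lift.{1} μ) := by
            gcongr
            exact lift_le.mpr c2
        _ = Cardinal.lift.{1} μ := by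
            rw [mul_eq_self hμ1, mul_eq_self hμ1]
    · have hinj : Function.Injective (fun m : ↥A =>
          ((fun _ => m, fun _ => (∅ : Set (ℕ × ℕ)), m) : ShAux.Pt ↥A)) := by
        intro a b h
        exact congrArg (fun p : ShAux.Pt ↥A => p.2.2) h
      calc Cardinal.lift.{1} μ = #↥A := hAcard.symm
        _ ≤ _ := mk_le_of_injective hinj
  have E : ShAux.Pt ↥A ≃ ↥A := (Cardinal.eq.mp (hPt.trans hAcard.symm)).some
  set emb : ShAux.Pt ↥A → Ordinal := fun p => ((E p : ↥A) : Ordinal) with hemb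
  have embinj : Function.Injective emb := fun a b h =>
    E.injective (Subtype.val_injective h)
  set imgB : Set ↥A → Set Ordinal := fun S => emb '' ShAux.B S with himgB
  have imgB_subset : ∀ S, imgB S ⊆ A := by
    rintro S - ⟨p, -, rfl⟩
    exact (E p).2
  have mem_imgB : ∀ (p : ShAux.Pt ↥A) (S : Set ↥A), emb p ∈ imgB S ↔ p ∈ ShAux.B S := by
    intro p S
    constructor
    · rintro ⟨p', hp', h⟩
      rwa [embinj h] at hp'
    · exact fun h => ⟨p, h, rfl⟩
  -- subsets of A of size μ are unbounded
  have hub : ∀ S : Set Ordinal, S ⊆ Set.Iio μ.ord → Cardinal.lift.{1} μ ≤ #↥S →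
      ∀ β < μ.ord, ∃ x ∈ S, β < x := by
    intro S hSsub hScard β hβ
    by_contra h
    push_neg at h
    have hsub2 : S ⊆ Iio (Order.succ β) := fun x hx => (Order.lt_succ_iff).mpr (h x hx)
    have hlt : Order.succ β < μ.ord := (Cardinal.isSuccLimit_ord hμ0).succ_lt hβ
    have hle : #↥S ≤ Cardinal.lift.{1} (Order.succ β).card := by
      rw [← Ordinal.mk_Iio_ordinal]
      exact mk_le_mk_of_subset hsub2
    have h2 : (Order.succ β).card < μ := Cardinal.lt_ord.mp hlt
    exact absurd (hScard.trans hle) (not_le.mpr (lift_lt.mpr h2))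
  -- the realization lemma
  have lemRe : ∀ D : Set (Set ↥A), D.Countable → ∀ ε : Set ↥A → Bool, ∀ β < μ.ord,
      ∃ x, x ∈ A ∧ β < x ∧ ∀ S ∈ D, (x ∈ imgB S ↔ ε S = true) := by
    intro D hD ε β hβ
    obtain ⟨f, g, hfg⟩ := ShAux.exists_realizer D hD ε
    set F0 : ↥A → Ordinal := fun m => emb (f, g, m) with hF0
    have hF0inj : Function.Injective F0 := by
      intro a b h
      have h2 := embinj h
      exact congrArg (fun p : ShAux.Pt ↥A => p.2.2) h2
    have hrsub : range F0 ⊆ Set.Iio μ.ord := by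
      rintro - ⟨m, rfl⟩
      exact hA (E (f, g, m)).2
    have hrc : Cardinal.lift.{1} μ ≤ #↥(range F0) := by
      rw [mk_range_eq F0 hF0inj, hAcard]
    obtain ⟨x, hxr, hxβ⟩ := hub (range F0) hrsub hrc β hβ
    obtain ⟨m, rfl⟩ := hxr
    refine ⟨F0 m, (E (f, g, m)).2, hxβ, fun S hS => ?_⟩
    rw [show F0 m = emb (f, g, m) from rfl, mem_imgB]
    simpa [ShAux.B] using hfg S hS
  -- enumeration equivalences
  have eK : ↥(Set.Iio ((2 : Cardinal) ^ μ).ord) ≃ Set ↥A := by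
    refine (Cardinal.eq.mp ?_).some
    rw [Ordinal.mk_Iio_ordinal, Cardinal.card_ord, mk_set, hAcard, ← lift_two_power]
  have eL : ↥(Set.Iio ((2 : Cardinal) ^ ((2 : Cardinal) ^ μ)).ord) ≃ Set (Set ↥A) := by
    refine (Cardinal.eq.mp ?_).some
    rw [Ordinal.mk_Iio_ordinal, Cardinal.card_ord, mk_set, mk_set, hAcard,
      ← lift_two_power, ← lift_two_power]
  have q : (Set ↥A × Bool) ≃ Set ↥A := by
    refine (Cardinal.eq.mp ?_).some
    rw [mk_prod, Cardinal.mk_bool]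
    simp only [Cardinal.lift_id', Cardinal.lift_two]
    have hinf : ℵ₀ ≤ #(Set ↥A) := by
      rw [mk_set, hAcard]
      calc ℵ₀ = Cardinal.lift.{1} ℵ₀ := lift_aleph0.symm
        _ ≤ Cardinal.lift.{1} μ := lift_le.mpr hμ0
        _ ≤ 2 ^ Cardinal.lift.{1} μ := (cantor _).le
    exact mul_eq_left hinf
      ((by exact_mod_cast (Cardinal.nat_lt_aleph0 2).le : (2 : Cardinal.{1}) ≤ ℵ₀).trans hinf)
      two_ne_zero
  set rep : Set (Set ↥A) → Set ↥A → Set ↥A :=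
    fun X S => if S ∈ X then q (S, true) else q (S, false) with hrep
  set hX : Ordinal → Set (Set ↥A) :=
    fun ξ => if h : ξ < ((2 : Cardinal) ^ ((2 : Cardinal) ^ μ)).ord then eL ⟨ξ, h⟩ else ∅
    with hhX
  set idx : Ordinal → Ordinal → Set ↥A :=
    fun ξ γ => if h : γ < ((2 : Cardinal) ^ μ).ord then rep (hX ξ) (eK ⟨γ, h⟩) else ∅
    with hidx
  have hidxmem : ∀ ξ γ, γ < ((2 : Cardinal) ^ μ).ord → idx ξ γ ∈ range (rep (hX ξ)) := by
    intro ξ γ h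
    rw [hidx]
    simp only [dif_pos h]
    exact ⟨eK ⟨γ, h⟩, rfl⟩
  have hidxsurj : ∀ ξ (S : Set ↥A), ∃ γ, ∃ _ : γ < ((2 : Cardinal) ^ μ).ord,
      idx ξ γ = rep (hX ξ) S := by
    intro ξ S
    refine ⟨(eK.symm S).1, (eK.symm S).2, ?_⟩
    rw [hidx]
    simp only [dif_pos (eK.symm S).2]
    exact (dif_pos (eK.symm S).2).trans (congrArg (rep (hX ξ)) (eK.apply_symm_apply S))
  have incomp : ∀ X X' : Set (Set ↥A), X ≠ X' → ∃ S, rep X S ∉ range (rep X') := by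
    intro X X' hne'
    have hex : ∃ s, (s ∈ X ∧ s ∉ X') ∨ (s ∈ X' ∧ s ∉ X) := by
      by_contra hh
      push_neg at hh
      apply hne'
      ext s
      have := hh s
      tauto
    obtain ⟨s, hs⟩ := hex
    rcases hs with ⟨h1, h2⟩ | ⟨h1, h2⟩
    · refine ⟨s, ?_⟩
      rintro ⟨S', hS'⟩
      rw [hrep] at hS'
      simp only [if_pos h1] at hS'
      by_cases hS'X : S' ∈ X'
      · rw [if_pos hS'X] at hS'
        have := q.injective hS'
        exact h2 (((Prod.mk.injEq _ _ _ _).mp this).1 ▸ hS'X)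
      · rw [if_neg hS'X] at hS'
        have := q.injective hS'
        exact absurd ((Prod.mk.injEq _ _ _ _).mp this).2 (by simp)
    · refine ⟨s, ?_⟩
      rintro ⟨S', hS'⟩
      rw [hrep] at hS'
      simp only [if_neg h2] at hS'
      by_cases hS'X : S' ∈ X'
      · rw [if_pos hS'X] at hS'
        have := q.injective hS'
        exact absurd ((Prod.mk.injEq _ _ _ _).mp this).2 (by simp)
      · rw [if_neg hS'X] at hS'
        have := q.injective hS'
        exact hS'X ((((Prod.mk.injEq _ _ _ _).mp this).1).symm ▸ h1)
  -- the workhorse: hitting a countable intersection of generators while controlling δ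
  have inCap : ∀ ξ : Ordinal, ∀ C : Set (Set Ordinal),
      (C ⊆ {s | ∃ γ' < ((2 : Cardinal) ^ μ).ord, ∃ β < μ.ord,
        s = {x | x ∈ imgB (idx ξ γ') ∧ β ≤ x}}) →
      C.Countable → C.Nonempty →
      ∀ δ : Set ↥A, ∀ b : Bool, (b = false → δ ∉ range (rep (hX ξ))) →
      ∃ x, x ∈ ⋂₀ C ∧ x ∈ A ∧ (x ∈ imgB δ ↔ b = true) := by
    intro ξ C hsub hcnt hCne δ b hb
    obtain ⟨σ, hσ⟩ := hcnt.exists_eq_range hCne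
    have hch : ∀ n : ℕ, ∃ γ', γ' < ((2 : Cardinal) ^ μ).ord ∧ ∃ β, β < μ.ord ∧
        σ n = {x | x ∈ imgB (idx ξ γ') ∧ β ≤ x} := by
      intro n
      have hmem : σ n ∈ C := by rw [hσ]; exact ⟨n, rfl⟩
      obtain ⟨γ', hγ', β, hβ, hs⟩ := hsub hmem
      exact ⟨γ', hγ', β, hβ, hs⟩
    choose γf hγf βf hβf hσf using hch
    have hβ0 : (⨆ n, βf n) < μ.ord :=
      Ordinal.iSup_lt_ord (by rw [mk_nat]; exact hcof) hβf
    obtain ⟨x, hxA, hxβ, hxiff⟩ := lemRe (insert δ (range fun n => idx ξ (γf n)))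
      ((countable_range _).insert δ) (fun S => if S = δ then b else true) _ hβ0
    refine ⟨x, ?_, hxA, ?_⟩
    · intro c hc
      rw [hσ] at hc
      obtain ⟨n, rfl⟩ := hc
      rw [hσf n]
      have hεv : (fun S => if S = δ then b else true) (idx ξ (γf n)) = true := by
        show (if idx ξ (γf n) = δ then b else true) = true
        by_cases hne3 : idx ξ (γf n) = δ
        · rw [if_pos hne3]
          cases b with
          | false => exact absurd (hne3 ▸ hidxmem ξ (γf n) (hγf n)) (hb rfl)
          | true => rfl
        · rw [if_neg hne3]
      have hmem := (hxiff _ (Set.mem_insert_of_mem _ ⟨n, rfl⟩)).mpr hεv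
      exact ⟨hmem, (Ordinal.le_iSup βf n).trans hxβ.le⟩
    · have h := hxiff δ (Set.mem_insert _ _)
      rwa [if_pos rfl] at h
  -- the families
  refine ⟨fun ξ γ => imgB (idx ξ γ), ?_, ?_, ?_⟩
  · intro ξ hξ γ hγ
    refine ⟨imgB_subset _, ?_⟩
    intro β hβ
    obtain ⟨x, hxA, hxβ, hxiff⟩ := lemRe {idx ξ γ} (countable_singleton _)
      (fun _ => true) β hβ
    exact ⟨x, (hxiff _ rfl).mpr rfl, hxβ⟩
  · intro ξ hξ hmem
    obtain ⟨C, hsub, hcnt, hCne, hint⟩ := hmem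
    obtain ⟨x, hxC, -, -⟩ := inCap ξ C hsub hcnt hCne ∅ true (by simp)
    exact absurd (hint hxC) (Set.notMem_empty x)
  · intro ξ₁ hξ₁ ξ₂ hξ₂ hne12 hall
    have hXne : hX ξ₁ ≠ hX ξ₂ := by
      rw [hhX]
      simp only [dif_pos hξ₁, dif_pos hξ₂]
      intro h
      have h2 := eL.injective h
      exact hne12 (congrArg Subtype.val h2)
    obtain ⟨S, hS⟩ := incomp _ _ hXne
    obtain ⟨γ₀, hγ₀, hidxeq⟩ := hidxsurj ξ₁ S
    have hδ2 : idx ξ₁ γ₀ ∉ range (rep (hX ξ₂)) := by rw [hidxeq]; exact hS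
    rcases hall γ₀ hγ₀ with h | h
    · obtain ⟨C, hsub, hcnt, hCne, hint⟩ := h
      obtain ⟨x, hxC, hxA, hxiff⟩ := inCap ξ₂ C hsub hcnt hCne (idx ξ₁ γ₀) true (by simp)
      have hxd := hint hxC
      exact hxd.2 (hxiff.mpr rfl)
    · obtain ⟨C, hsub, hcnt, hCne, hint⟩ := h
      obtain ⟨x, hxC, hxA, hxiff⟩ := inCap ξ₂ C hsub hcnt hCne (idx ξ₁ γ₀) false
        (fun _ => hδ2)
      have hxd := hint hxC
      apply hxd.2
      exact ⟨hxA, fun hmem => absurd (hxiff.mp hmem) (by simp)⟩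
end

section
/- Let λ be a regular uncountable cardinal, γ* < λ⁺ an ordinal, and S ⊆ λ a stationary set. Suppose for each γ < γ* and each μ ∈ S we are given a family P^γ_μ ⊆ P(P(μ)) of cardinality ≤ 2^μ, and suppose for each μ ∈ S we are given pairwise distinct objects x^ξ_μ for ξ < 2^(2^μ) such that each P ∈ ⋃_{γ<γ*} P^γ_μ 'matches' at most one ξ. Then there is a choice ⟨ξ(μ) : μ ∈ S⟩ with ξ(μ) < 2^(2^μ) such that for every γ < γ* the set {μ ∈ S : some P ∈ P^γ_μ matches ξ(μ)} is non-stationary in λ. -/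
open Cardinal Set

/-- `E` is a closed unbounded (club) subset of the ordinal `lam`. -/
def IsClubOrd (lam : Ordinal) (E : Set Ordinal) : Prop :=
  E ⊆ Set.Iio lam ∧ (∀ α < lam, ∃ δ ∈ E, α < δ) ∧
    ∀ δ < lam, Order.IsSuccLimit δ → (∀ α < δ, ∃ β ∈ E, α < β ∧ β < δ) → δ ∈ E

/-- `S` is stationary in `lam`: it meets every club of `lam`. -/
def IsStationaryOrd (lam : Ordinal) (S : Set Ordinal) : Prop :=
  ∀ C : Set Ordinal, IsClubOrd lam C → (S ∩ C).Nonempty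

theorem aux_nat (n : ℕ) : n * 2 ^ n < 2 ^ (2 ^ n) := by
  have h1 : n < 2 ^ n := Nat.lt_two_pow_self
  have h2 : n + n ≤ 2 ^ n := by
    cases n with
    | zero => simp
    | succ m =>
      have h3 : m < 2 ^ m := Nat.lt_two_pow_self
      have h4 : 2 ^ (m + 1) = 2 * 2 ^ m := by rw [pow_succ]; ring
      omega
  calc n * 2 ^ n < 2 ^ n * 2 ^ n :=
        mul_lt_mul_of_pos_right h1 (pow_pos (by norm_num) n)
    _ = 2 ^ (n + n) := (pow_add 2 n n).symm
    _ ≤ 2 ^ (2 ^ n) := Nat.pow_le_pow_right (by norm_num) h2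

theorem aux_card (a : Cardinal.{u}) : a * 2 ^ a < 2 ^ ((2 : Cardinal) ^ a) := by
  rcases lt_or_ge a ℵ₀ with h | h
  · obtain ⟨n, rfl⟩ := Cardinal.lt_aleph0.1 h
    exact_mod_cast aux_nat n
  · rcases eq_or_ne a 0 with rfl | h0
    · exact absurd h (by simp [Cardinal.aleph0_ne_zero])
    have h2 : ℵ₀ ≤ (2 : Cardinal) ^ a := h.trans (Cardinal.cantor a).le
    rw [Cardinal.mul_eq_right h2 (Cardinal.cantor a).le h0]
    exact Cardinal.cantor _

/-- Shelah [Sh:906], ⊙₅ (abstract form): `λ` strongly inaccessible, `γ* < λ⁺`,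
`S ⊆ λ` stationary, families `P^γ_μ ⊆ P(P(μ))` of cardinality `≤ 2^μ`, and a matching
relation `R` such that each `P` matches at most one `ξ < 2^(2^μ)`.  Then there is a
choice `⟨ξ(μ) : μ ∈ S⟩` such that for every `γ < γ*` the set of `μ ∈ S` at which some
`P ∈ P^γ_μ` matches `ξ(μ)` is non-stationary. -/
theorem stmt9 (lam : Cardinal.{0}) (hlam : lam.IsInaccessible)
    (γst : Ordinal) (hγ : γst < (Order.succ lam).ord)
    (S : Set Ordinal) (hSsub : S ⊆ Set.Iio lam.ord) (hSstat : IsStationaryOrd lam.ord S)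
    (P : Ordinal.{0} → Ordinal.{0} → Set (Set (Set Ordinal.{0})))
    (hP : ∀ γ < γst, ∀ μ ∈ S, #(P γ μ) ≤ Cardinal.lift.{1} ((2 : Cardinal) ^ μ.card))
    (hPsub : ∀ γ < γst, ∀ μ ∈ S, ∀ p ∈ P γ μ, ∀ X ∈ p, X ⊆ Set.Iio μ)
    (R : Ordinal → Set (Set Ordinal) → Ordinal → Prop)
    (hR : ∀ μ ∈ S, ∀ p ξ₁ ξ₂, R μ p ξ₁ → R μ p ξ₂ → ξ₁ = ξ₂) :
    ∃ xi : Ordinal → Ordinal,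
      (∀ μ ∈ S, xi μ < ((2 : Cardinal) ^ ((2 : Cardinal) ^ μ.card)).ord) ∧
      ∀ γ < γst,
        ¬ IsStationaryOrd lam.ord {μ | μ ∈ S ∧ ∃ p ∈ P γ μ, R μ p (xi μ)} := by
  classical
  -- an injection from `Iio γst` into `Iio lam.ord`
  have hle : γst.card ≤ lam := Order.lt_succ_iff.1 (Cardinal.lt_ord.1 hγ)
  have hemb : Nonempty (Iio γst ↪ Iio lam.ord) := by
    rw [← Cardinal.le_def, Ordinal.mk_Iio_ordinal, Ordinal.mk_Iio_ordinal,
      Cardinal.lift_le, Cardinal.card_ord]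
    exact hle
  obtain ⟨f⟩ := hemb
  set F : Ordinal → Ordinal := fun γ => if h : γ < γst then (f ⟨γ, h⟩ : Ordinal) else 0 with hF
  have hFlt : ∀ γ < γst, F γ < lam.ord := by
    intro γ h
    simp only [hF, dif_pos h]
    exact (f ⟨γ, h⟩).2
  have hFinj : ∀ γ₁, γ₁ < γst → ∀ γ₂, γ₂ < γst → F γ₁ = F γ₂ → γ₁ = γ₂ := by
    intro γ₁ h1 γ₂ h2 he
    simp only [hF, dif_pos h1, dif_pos h2] at he
    have := f.injective (Subtype.ext he)
    exact congrArg Subtype.val this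
  -- for each μ ∈ S choose ξ avoiding all matches from γ with F γ < μ
  have key : ∀ μ ∈ S, ∃ ξ, ξ < ((2 : Cardinal) ^ ((2 : Cardinal) ^ μ.card)).ord ∧
      ∀ γ < γst, F γ < μ → ∀ p ∈ P γ μ, ¬ R μ p ξ := by
    intro μ hμ
    set u : Set Ordinal := {γ | γ < γst ∧ F γ < μ} with hu_def
    set Bad : Set Ordinal := {ξ | ∃ γ, γ < γst ∧ F γ < μ ∧ ∃ p ∈ P γ μ, R μ p ξ} with hBad_def
    have hu : #u ≤ Cardinal.lift.{1} μ.card := by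
      rw [← Ordinal.mk_Iio_ordinal]
      refine Cardinal.mk_le_of_injective (f := fun γ : u => (⟨F γ, γ.2.2⟩ : Iio μ)) ?_
      intro γ₁ γ₂ he
      exact Subtype.ext (hFinj _ γ₁.2.1 _ γ₂.2.1 (congrArg Subtype.val he))
    have hBad : #Bad < Cardinal.lift.{1} ((2 : Cardinal) ^ ((2 : Cardinal) ^ μ.card)) := by
      have hchoice : ∀ ξ : Bad, ∃ gp : Σ γ : u, ↥(P (γ : Ordinal) μ),
          R μ (gp.2 : Set (Set Ordinal)) (ξ : Ordinal) := by
        rintro ⟨ξ, γ, h1, h2, p, hp, hR'⟩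
        exact ⟨⟨⟨γ, h1, h2⟩, ⟨p, hp⟩⟩, hR'⟩
      choose g hg using hchoice
      have hginj : Function.Injective g := by
        intro ξ₁ ξ₂ he
        have h1 := hg ξ₁
        have h2 := hg ξ₂
        rw [he] at h1
        exact Subtype.ext (hR μ hμ _ _ _ h1 h2)
      calc #Bad ≤ #(Σ γ : u, ↥(P (γ : Ordinal) μ)) := Cardinal.mk_le_of_injective hginj
        _ = Cardinal.sum (fun γ : u => #(P (γ : Ordinal) μ)) := Cardinal.mk_sigma _
        _ ≤ Cardinal.sum (fun _ : u => Cardinal.lift.{1} ((2 : Cardinal) ^ μ.card)) :=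
            Cardinal.sum_le_sum _ _ (fun γ => hP _ γ.2.1 μ hμ)
        _ = #u * Cardinal.lift.{1} ((2 : Cardinal) ^ μ.card) := Cardinal.sum_const' _ _
        _ ≤ Cardinal.lift.{1} μ.card * Cardinal.lift.{1} ((2 : Cardinal) ^ μ.card) :=
            mul_le_mul_left hu _
        _ = Cardinal.lift.{1} (μ.card * (2 : Cardinal) ^ μ.card) := (Cardinal.lift_mul _ _).symm
        _ < _ := Cardinal.lift_lt.2 (aux_card μ.card)
    have hns : ¬ (Iio ((2 : Cardinal) ^ ((2 : Cardinal) ^ μ.card)).ord ⊆ Bad) := by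
      intro hsub
      have h1 := Cardinal.mk_le_mk_of_subset hsub
      rw [Ordinal.mk_Iio_ordinal, Cardinal.card_ord] at h1
      exact (h1.trans_lt hBad).false
    obtain ⟨ξ, hξ1, hξ2⟩ := not_subset.1 hns
    refine ⟨ξ, hξ1, ?_⟩
    intro γ hγ' hFγ p hp hRξ
    exact hξ2 ⟨γ, hγ', hFγ, p, hp, hRξ⟩
  set xi : Ordinal → Ordinal :=
    fun μ => if h : μ ∈ S then Classical.choose (key μ h) else 0 with hxi
  refine ⟨xi, ?_, ?_⟩
  · intro μ hμ
    simp only [hxi, dif_pos hμ]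
    exact (Classical.choose_spec (key μ hμ)).1
  · intro γ hγlt hstat
    have hclub : IsClubOrd lam.ord (Ioi (F γ) ∩ Iio lam.ord) := by
      have hlim : Order.IsSuccLimit lam.ord := Cardinal.isSuccLimit_ord hlam.1.le
      refine ⟨inter_subset_right, ?_, ?_⟩
      · intro α hα
        have hsucc : max α (F γ) < max α (F γ) + 1 := by
          rw [Ordinal.add_one_eq_succ]; exact Order.lt_succ _
        refine ⟨max α (F γ) + 1, ⟨?_, ?_⟩, ?_⟩
        · exact lt_of_le_of_lt (le_max_right _ _) hsucc
        · rw [Ordinal.add_one_eq_succ]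
          exact hlim.succ_lt (max_lt hα (hFlt γ hγlt))
        · exact lt_of_le_of_lt (le_max_left _ _) hsucc
      · intro δ hδ hdlim hcl
        refine ⟨?_, hδ⟩
        by_contra hcon
        obtain ⟨β, hβC, _, hβδ⟩ := hcl 0 hdlim.pos
        exact absurd (hβC.1.trans hβδ) (by simpa using hcon)
    obtain ⟨μ, hμT, hμC⟩ := hstat (Ioi (F γ) ∩ Iio lam.ord) hclub
    obtain ⟨hμS, p, hp, hRp⟩ := hμT
    have hspec := (Classical.choose_spec (key μ hμS)).2 γ hγlt hμC.1 p hp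
    apply hspec
    simpa only [hxi, dif_pos hμS] using hRp
end

section
/- Let λ be a strongly inaccessible cardinal, θ < λ a regular uncountable cardinal, S_* = {ℶ_{α+ω} : α < λ}, and E_* = {δ < λ : θ < δ = ℶ_δ}. Then there exists a sequence ⟨C_α : α < λ⟩ such that: (a) C_α ⊆ α ∩ S_*; (b) if β ∈ C_α then C_β = C_α ∩ β; (c) otp(C_α) ≤ θ; (d) otp(C_α) = θ if and only if α ∈ E_* and cf(α) = θ; and (e) if α ∈ E_* with cf(α) = θ then sup(C_α) = α. -/
open Cardinal Set Ordinal

/-- The order type of a set of ordinals. -/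
noncomputable def otp (s : Set Ordinal) : Ordinal :=
  Ordinal.type ((· < ·) : s → s → Prop)
noncomputable section
namespace Sh906

theorem bethOrd_strictMono : StrictMono (fun o => (beth o).ord) :=
  ord_strictMono.comp beth_strictMono

theorem self_le_bethOrd (o : Ordinal) : o ≤ (beth o).ord :=
  bethOrd_strictMono.le_apply

theorem card_le_beth (o : Ordinal) : o.card ≤ beth o := by
  simpa [card_ord] using Ordinal.card_le_card (self_le_bethOrd o)

/-- `f` of the construction : `γ ↦ ℶ_{γ+ω}` -/
def fOrd (γ : Ordinal.{0}) : Ordinal.{0} := (beth (γ + omega0)).ord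

/-- block offset -/
def FF (σ : Ordinal.{0}) : Ordinal.{0} := (beth (σ + 4)).ord

theorem mk_block_le (σ : Ordinal.{0}) :
    #(Iio (σ + 1) × Set (Iio (σ + 1))) ≤ #(Iio ((beth (σ + 2)).ord)) := by
  rw [mk_prod, Cardinal.mk_Iio_ordinal, mk_set, Cardinal.mk_Iio_ordinal, Cardinal.mk_Iio_ordinal, card_ord,
    Cardinal.lift_id, ← Cardinal.lift_two_power, Cardinal.lift_lift, ← Cardinal.lift_mul, Cardinal.lift_le]
  have h1 : (σ + 1).card ≤ beth (σ + 1) := card_le_beth _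
  have h2 : beth (σ + 1) ≤ beth (σ + 2) := beth_le_beth.2 (by gcongr; norm_cast)
  calc (σ+1).card * 2 ^ (σ+1).card
      ≤ beth (σ + 1) * 2 ^ beth (σ + 1) := by
        exact mul_le_mul' h1 (power_le_power_left two_ne_zero h1)
    _ = beth (σ + 1) * beth (Order.succ (σ + 1)) := by rw [beth_succ]
    _ ≤ beth (σ + 2) * beth (σ + 2) := by
        refine mul_le_mul' h2 (beth_le_beth.2 ?_)
        rw [← Ordinal.add_one_eq_succ, add_assoc]
        norm_cast
    _ = beth (σ + 2) := Cardinal.mul_eq_self (aleph0_le_beth _)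

/-- the block embedding, by choice -/
def embBlock (σ : Ordinal.{0}) :
    (Iio (σ + 1) × Set (Iio (σ + 1))) ↪ Iio ((beth (σ + 2)).ord) :=
  (Cardinal.le_def _ _).1 (mk_block_le σ) |>.some

def sigmaP (p : Ordinal.{0} × Set Ordinal.{0}) : Ordinal.{0} := max p.1 (sSup p.2)

/-- the admissible pairs -/
def BB : Set (Ordinal.{0} × Set Ordinal.{0}) := {p | BddAbove p.2}

open scoped Classical in
/-- blockwise coding of pairs, non-dependent version -/
def eFun (σ : Ordinal.{0}) (p : Ordinal.{0} × Set Ordinal.{0}) : Ordinal.{0} :=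
  if h : p.1 < σ + 1 ∧ p.2 ⊆ Iio (σ + 1) then
    (embBlock σ (⟨p.1, h.1⟩, {x | ↑x ∈ p.2})).1
  else 0

theorem eFun_lt (σ p) : eFun σ p < (beth (σ + 2)).ord := by
  rw [eFun]
  split
  · exact (embBlock σ _).2
  · have h1 : (0:Ordinal) < Cardinal.ord ℵ₀ := by rw [ord_aleph0]; exact omega0_pos
    exact lt_of_lt_of_le h1 (ord_le_ord.2 (aleph0_le_beth _))

theorem eFun_inj {σ : Ordinal.{0}} {p q : Ordinal.{0} × Set Ordinal.{0}}
    (hp : p.1 < σ + 1 ∧ p.2 ⊆ Iio (σ + 1)) (hq : q.1 < σ + 1 ∧ q.2 ⊆ Iio (σ + 1))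
    (h : eFun σ p = eFun σ q) : p = q := by
  rw [eFun, dif_pos hp, eFun, dif_pos hq] at h
  have hXY := (embBlock σ).injective (Subtype.ext h)
  have h1 : p.1 = q.1 := congrArg Subtype.val (congrArg Prod.fst hXY)
  have hS := congrArg Prod.snd hXY
  dsimp only at hS
  have h2 : p.2 = q.2 := by
    ext x
    constructor
    · intro hx
      have : (⟨x, hp.2 hx⟩ : Iio (σ + 1)) ∈ {y : Iio (σ + 1) | ↑y ∈ p.2} := hx
      rw [hS] at this
      exact this
    · intro hx
      have : (⟨x, hq.2 hx⟩ : Iio (σ + 1)) ∈ {y : Iio (σ + 1) | ↑y ∈ q.2} := hx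
      rw [← hS] at this
      exact this
  exact Prod.ext h1 h2

def codeP (p : Ordinal.{0} × Set Ordinal.{0}) : Ordinal.{0} :=
  FF (sigmaP p) + omega0 * eFun (sigmaP p) p

theorem mem_BB_subset {p : Ordinal.{0} × Set Ordinal.{0}} (hp : p ∈ BB) :
    p.1 < sigmaP p + 1 ∧ p.2 ⊆ Iio (sigmaP p + 1) := by
  constructor
  · rw [Ordinal.add_one_eq_succ, Order.lt_succ_iff]; exact le_max_left _ _
  · intro x hx
    have : x ≤ sSup p.2 := le_csSup hp hx
    rw [mem_Iio, Ordinal.add_one_eq_succ, Order.lt_succ_iff]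
    exact this.trans (le_max_right _ _)

theorem FF_le_codeP (p) : FF (sigmaP p) ≤ codeP p := le_self_add

theorem sigmaP_le_codeP (p) : sigmaP p ≤ codeP p := by
  refine le_trans (le_trans (le_self_add (b := 4)) (self_le_bethOrd _)) (FF_le_codeP p)

theorem card_codeP_le (p) : (codeP p).card ≤ beth (sigmaP p + 4) := by
  rw [codeP, Ordinal.card_add, Ordinal.card_mul]
  have hε : (eFun (sigmaP p) p).card < beth (sigmaP p + 2) := Cardinal.lt_ord.1 (eFun_lt _ _)
  have h2 : beth (sigmaP p + 2) ≤ beth (sigmaP p + 4) := by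
    refine beth_le_beth.2 ?_
    gcongr
    norm_cast
  calc (FF (sigmaP p)).card + omega0.card * (eFun (sigmaP p) p).card
      ≤ beth (sigmaP p + 4) + ℵ₀ * beth (sigmaP p + 4) := by
        rw [FF, card_ord, card_omega0]
        gcongr
        exact le_trans hε.le h2
    _ ≤ beth (sigmaP p + 4) + beth (sigmaP p + 4) * beth (sigmaP p + 4) := by
        gcongr
        exact aleph0_le_beth _
    _ = beth (sigmaP p + 4) := by
        rw [Cardinal.mul_eq_self (aleph0_le_beth _), Cardinal.add_eq_self (aleph0_le_beth _)]

theorem self_lt_fOrd (γ : Ordinal.{0}) : γ < fOrd γ := by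
  have h1 : γ + 0 < γ + omega0 := add_lt_add_right omega0_pos γ
  simp only [add_zero] at h1
  exact lt_of_lt_of_le h1 (self_le_bethOrd _)

theorem fOrd_inj {γ γ' : Ordinal.{0}} (h : fOrd γ = fOrd γ') : γ + omega0 = γ' + omega0 :=
  beth_strictMono.injective (ord_injective h)

theorem omega_mul_succ_inj {a b : Ordinal} (h : omega0 * Order.succ a = omega0 * Order.succ b) :
    a = b := by
  by_contra hne
  rcases lt_or_gt_of_ne hne with hlt | hlt
  · exact absurd h (ne_of_lt ((mul_lt_mul_iff_of_pos_left omega0_pos).2 (Order.succ_lt_succ hlt)))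
  · exact absurd h.symm
      (ne_of_lt ((mul_lt_mul_iff_of_pos_left omega0_pos).2 (Order.succ_lt_succ hlt)))

theorem add_nat_lt_add_nat {a b : Ordinal} (h : a < b) (n : ℕ) : a + (n : Ordinal) < b + n := by
  have h1 : a + (n : Ordinal) < a + ((n : Ordinal) + 1) := add_lt_add_right (lt_add_one _) a
  have h2 : a + ((n : Ordinal) + 1) = (a + 1) + n := by
    have : (n : Ordinal) + 1 = 1 + n := by norm_cast; omega
    rw [this, ← add_assoc]
  have h3 : (a + 1) + (n : Ordinal) ≤ b + n := by
    apply add_le_add_left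
    rw [Ordinal.add_one_eq_succ]
    exact Order.succ_le_of_lt h
  exact lt_of_lt_of_le (h2 ▸ h1) h3

theorem codeP_card_lt (p q) (hσ : sigmaP p < sigmaP q) :
    (codeP p + omega0).card < (codeP q + omega0).card := by
  have h1 : (codeP p + omega0).card ≤ beth (sigmaP p + 4) := by
    rw [Ordinal.card_add, card_omega0]
    calc (codeP p).card + ℵ₀ ≤ beth (sigmaP p + 4) + beth (sigmaP p + 4) :=
          add_le_add (card_codeP_le p) (aleph0_le_beth _)
      _ = beth (sigmaP p + 4) := Cardinal.add_eq_self (aleph0_le_beth _)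
  have h2 : beth (sigmaP q + 4) ≤ (codeP q + omega0).card := by
    calc beth (sigmaP q + 4) = (FF (sigmaP q)).card := (card_ord _).symm
      _ ≤ (codeP q + omega0).card :=
          Ordinal.card_le_card ((FF_le_codeP q).trans le_self_add)
  refine lt_of_le_of_lt h1 (lt_of_lt_of_le ?_ h2)
  exact beth_lt_beth.2 (by exact_mod_cast add_nat_lt_add_nat hσ 4)

theorem code_inj {p q : Ordinal.{0} × Set Ordinal.{0}} (hp : p ∈ BB) (hq : q ∈ BB)
    (h : fOrd (codeP p) = fOrd (codeP q)) : p = q := by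
  have h0 : codeP p + omega0 = codeP q + omega0 := fOrd_inj h
  have hσ : sigmaP p = sigmaP q := by
    by_contra hne
    rcases lt_or_gt_of_ne hne with hlt | hlt
    · exact absurd (congrArg Ordinal.card h0) (ne_of_lt (codeP_card_lt p q hlt))
    · exact absurd (congrArg Ordinal.card h0).symm (ne_of_lt (codeP_card_lt q p hlt))
  rw [codeP, codeP, ← hσ] at h0
  rw [add_assoc, add_assoc, add_right_inj] at h0
  rw [← Ordinal.mul_succ, ← Ordinal.mul_succ] at h0
  have hε := omega_mul_succ_inj h0
  refine eFun_inj (mem_BB_subset hp) ?_ hε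
  have := mem_BB_subset hq
  rw [← hσ] at this
  exact this

open scoped Classical in
/-- The decoding function. -/
def DD (β : Ordinal.{0}) : Set Ordinal.{0} :=
  if h : ∃ p, p ∈ BB ∧ fOrd (codeP p) = β then h.choose.2 else ∅

theorem DD_eq {p : Ordinal.{0} × Set Ordinal.{0}} (hp : p ∈ BB) :
    DD (fOrd (codeP p)) = p.2 := by
  rw [DD]
  have hex : ∃ q, q ∈ BB ∧ fOrd (codeP q) = fOrd (codeP p) := ⟨p, hp, rfl⟩
  rw [dif_pos hex]
  have hspec := hex.choose_spec
  have := code_inj hspec.1 hp hspec.2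
  rw [this]

/-- choice of a fundamental sequence -/
def bseq (α : Ordinal.{0}) (i : Ordinal.{0}) : Ordinal.{0} :=
  if h : i < α.cof.ord then (exists_fundamental_sequence α).choose i h else 0

theorem bseq_lt (α : Ordinal.{0}) {i : Ordinal.{0}} (h : i < α.cof.ord) : bseq α i < α := by
  rw [bseq, dif_pos h]
  have hf := (exists_fundamental_sequence α).choose_spec
  conv_rhs => rw [← hf.blsub_eq]
  exact Ordinal.lt_blsub _ _ _

theorem le_bseq (α : Ordinal.{0}) {β : Ordinal.{0}} (h : β < α) :
    ∃ i, ∃ _ : i < α.cof.ord, β ≤ bseq α i := by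
  have hf := (exists_fundamental_sequence α).choose_spec
  have h2 : β < Ordinal.blsub α.cof.ord (exists_fundamental_sequence α).choose := by
    rw [hf.blsub_eq]; exact h
  rw [Ordinal.lt_blsub_iff] at h2
  obtain ⟨i, hi, hb⟩ := h2
  exact ⟨i, hi, by rw [bseq, dif_pos hi]; exact hb⟩

/-- the ladder sequence through `α`, by transfinite recursion -/
def xval (α : Ordinal.{0}) : Ordinal.{0} → Ordinal.{0} :=
  Ordinal.lt_wf.fix fun i IH =>
    fOrd (codeP (max (sSup {y | ∃ j, ∃ h : j < i, IH j h = y} + 1) (bseq α i),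
      {y | ∃ j, ∃ h : j < i, IH j h = y}))

def prefixSet (α i : Ordinal.{0}) : Set Ordinal.{0} := xval α '' Iio i

def pP (α i : Ordinal.{0}) : Ordinal.{0} × Set Ordinal.{0} :=
  (max (sSup (prefixSet α i) + 1) (bseq α i), prefixSet α i)

theorem xval_eq (α i : Ordinal.{0}) : xval α i = fOrd (codeP (pP α i)) := by
  have hset : {y | ∃ j, ∃ _ : j < i, xval α j = y} = prefixSet α i := by
    ext y
    constructor
    · rintro ⟨j, hj, rfl⟩; exact ⟨j, hj, rfl⟩
    · rintro ⟨j, hj, rfl⟩; exact ⟨j, hj, rfl⟩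
  conv_lhs => rw [xval, WellFounded.fix_eq]
  rw [pP, ← hset]
  rfl

theorem bddAbove_prefixSet (α i : Ordinal.{0}) : BddAbove (prefixSet α i) := by
  rw [prefixSet]
  exact Ordinal.bddAbove_of_small

theorem pP_mem_BB (α i : Ordinal.{0}) : pP α i ∈ BB := bddAbove_prefixSet α i

theorem DD_xval (α i : Ordinal.{0}) : DD (xval α i) = prefixSet α i := by
  rw [xval_eq]
  exact DD_eq (pP_mem_BB α i)

theorem p1_le_xval (α i : Ordinal.{0}) : (pP α i).1 ≤ xval α i := by
  calc (pP α i).1 ≤ sigmaP (pP α i) := le_max_left _ _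
    _ ≤ codeP (pP α i) := sigmaP_le_codeP _
    _ ≤ fOrd (codeP (pP α i)) := (self_lt_fOrd _).le
    _ = xval α i := (xval_eq α i).symm

theorem xval_strictMono (α : Ordinal.{0}) : StrictMono (xval α) := by
  intro j i h
  calc xval α j ≤ sSup (prefixSet α i) := le_csSup (bddAbove_prefixSet α i) ⟨j, h, rfl⟩
    _ < sSup (prefixSet α i) + 1 := lt_add_one _
    _ ≤ (pP α i).1 := le_max_left _ _
    _ ≤ xval α i := p1_le_xval α i

theorem codeP_lt_beth5 (p) : codeP p < (beth (sigmaP p + 5)).ord := by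
  rw [Cardinal.lt_ord]
  exact lt_of_le_of_lt (card_codeP_le p) (beth_lt_beth.2 (by gcongr; norm_cast))

theorem xval_lt {θ : Cardinal.{0}} {α : Ordinal.{0}} (h1 : (beth α).ord = α) (h2 : α.cof = θ)
    {i : Ordinal.{0}} (hi : i < θ.ord) : xval α i < α := by
  induction i using Ordinal.induction with
  | _ i IH =>
  have hbethα : ℵ₀ ≤ beth α := aleph0_le_beth α
  have hαlim : Order.IsSuccLimit α := h1 ▸ isSuccLimit_ord hbethα
  have hpre : ∀ j < i, xval α j < α := fun j hj => IH j hj (hj.trans hi)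
  have hsup : sSup (prefixSet α i) < α := by
    have hrange : prefixSet α i =
        Set.range (fun t : i.ToType => xval α (((ToType.mk : Iio i ≃o i.ToType)).symm t).1) := by
      ext y
      constructor
      · rintro ⟨j, hj, rfl⟩
        refine ⟨(ToType.mk : Iio i ≃o i.ToType) ⟨j, hj⟩, ?_⟩
        simp
      · rintro ⟨t, rfl⟩
        exact ⟨(((ToType.mk : Iio i ≃o i.ToType)).symm t).1, (((ToType.mk : Iio i ≃o i.ToType)).symm t).2, rfl⟩
    rw [hrange]
    refine Ordinal.iSup_lt_ord ?_ ?_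
    · rw [Cardinal.mk_toType, h2]
      exact Cardinal.lt_ord.1 hi
    · exact fun t => hpre _ (((ToType.mk : Iio i ≃o i.ToType)).symm t).2
  have hb : bseq α i < α := bseq_lt α (by rw [h2]; exact hi)
  have hsup1 : sSup (prefixSet α i) + 1 < α := by
    rw [Ordinal.add_one_eq_succ]
    exact hαlim.succ_lt hsup
  have hp1 : (pP α i).1 < α := max_lt hsup1 hb
  have hσ : sigmaP (pP α i) < α := by
    rw [sigmaP]
    exact max_lt hp1 hsup
  have hcard : ∀ n : ℕ, sigmaP (pP α i) + (n : Ordinal) < α := by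
    intro n
    have hc : (sigmaP (pP α i) + (n : Ordinal)).card < beth α := by
      rw [Ordinal.card_add, Ordinal.card_nat]
      exact Cardinal.add_lt_of_lt hbethα (Cardinal.lt_ord.1 (by rw [h1]; exact hσ))
        ((Cardinal.nat_lt_aleph0 n).trans_le hbethα)
    have hcc := Cardinal.lt_ord.2 hc
    rwa [h1] at hcc
  have hcode : codeP (pP α i) < α := by
    refine lt_of_lt_of_le (codeP_lt_beth5 (pP α i)) ?_
    calc (beth (sigmaP (pP α i) + 5)).ord ≤ (beth α).ord := by
          refine ord_le_ord.2 (beth_le_beth.2 ?_)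
          exact_mod_cast (hcard 5).le
      _ = α := h1
  have haleph : ℵ₀ < beth α := by
    have := beth_lt_beth.2 hαlim.pos
    rwa [beth_zero] at this
  have hfin : codeP (pP α i) + omega0 < α := by
    have hc : (codeP (pP α i) + omega0).card < beth α := by
      rw [Ordinal.card_add, card_omega0]
      exact Cardinal.add_lt_of_lt hbethα (Cardinal.lt_ord.1 (by rw [h1]; exact hcode)) haleph
    have hcc := Cardinal.lt_ord.2 hc
    rwa [h1] at hcc
  rw [xval_eq, fOrd]
  calc (beth (codeP (pP α i) + omega0)).ord < (beth α).ord := ord_lt_ord.2 (beth_lt_beth.2 hfin)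
    _ = α := h1

theorem codeP_pP_lt_xval (α i : Ordinal.{0}) : codeP (pP α i) < xval α i := by
  rw [xval_eq]
  exact self_lt_fOrd _

theorem le_xval {θ : Cardinal.{0}} {α : Ordinal.{0}} (h2 : α.cof = θ) {β : Ordinal.{0}}
    (hβ : β < α) : ∃ i, ∃ _ : i < θ.ord, β ≤ xval α i := by
  obtain ⟨i, hi, hb⟩ := le_bseq α hβ
  rw [h2] at hi
  refine ⟨i, hi, hb.trans ?_⟩
  calc bseq α i ≤ (pP α i).1 := le_max_right _ _
    _ ≤ xval α i := p1_le_xval α i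

theorem otp_empty : otp (∅ : Set Ordinal) = 0 := by
  simp [otp, Ordinal.type_eq_zero_iff_isEmpty]

theorem otp_mono {s t : Set Ordinal} (h : s ⊆ t) : otp s ≤ otp t := by
  refine (RelEmbedding.ordinal_type_le ?_)
  exact RelEmbedding.ofMonotone (fun x => ⟨x.1, h x.2⟩) (fun a b hab => hab)

theorem otp_Iio (o : Ordinal.{0}) : otp (Iio o) = Ordinal.lift.{1} o := by
  rw [← typein_ordinal o]
  rfl

theorem otp_image_Iio {g : Ordinal.{0} → Ordinal.{0}} {o : Ordinal.{0}}
    (h : StrictMonoOn g (Iio o)) : otp (g '' Iio o) = Ordinal.lift.{1} o := by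
  rw [← otp_Iio o]
  have hsm : StrictMono (fun x : Iio o => (⟨g x.1, ⟨x.1, x.2, rfl⟩⟩ : g '' Iio o)) := by
    intro a b hab
    exact h a.2 b.2 hab
  have hsurj : Function.Surjective (fun x : Iio o => (⟨g x.1, ⟨x.1, x.2, rfl⟩⟩ : g '' Iio o)) := by
    rintro ⟨y, x, hx, rfl⟩
    exact ⟨⟨x, hx⟩, rfl⟩
  have iso := StrictMono.orderIsoOfSurjective _ hsm hsurj
  exact (Ordinal.type_eq.2 ⟨iso.toRelIsoLT⟩).symm

/-- No point of `S_*` is a beth fixed point. -/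
theorem not_E_fOrd {θ : Cardinal.{0}} {γ α : Ordinal.{0}} (hα : α = fOrd γ) :
    ¬(θ.ord < α ∧ (beth α).ord = α ∧ α.cof = θ) := by
  rintro ⟨h1, h2, -⟩
  have hcard : α.card = beth (γ + omega0) := by rw [hα, fOrd, card_ord]
  have hbeth : beth α = α.card := by
    have := congrArg Ordinal.card h2
    rwa [card_ord] at this
  have hαγ : α = γ + omega0 := beth_strictMono.injective (by rw [hbeth, hcard])
  have hγα : γ < α := by
    rw [hαγ]
    simpa using (add_lt_add_right omega0_pos γ : γ + 0 < γ + omega0)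
  have h3 : γ.card < beth α := Cardinal.lt_ord.1 (by rw [h2]; exact hγα)
  have h4 : ℵ₀ < beth α := by
    have h0 : (0 : Ordinal) < α := lt_of_le_of_lt zero_le h1
    have := beth_lt_beth.2 h0
    rwa [beth_zero] at this
  have h5 : α.card = γ.card + ℵ₀ := by rw [hαγ, Ordinal.card_add, card_omega0]
  have hlt : α.card < beth α := by
    rw [h5]
    exact Cardinal.add_lt_of_lt h4.le h3 h4
  rw [← hbeth] at hlt
  exact lt_irrefl _ hlt

def SStar (lam : Cardinal.{0}) : Set Ordinal.{0} :=
  {x | ∃ β < lam.ord, x = (beth (β + omega0)).ord}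

def GoodP (lam θ : Cardinal.{0}) (α : Ordinal.{0}) : Prop :=
  (DD α ⊆ Iio α ∩ SStar lam) ∧ otp (DD α) < Ordinal.lift.{1} θ.ord ∧
    ∀ γ ∈ DD α, DD γ = DD α ∩ Iio γ

theorem GoodP_inherit {lam θ : Cardinal.{0}} {α γ : Ordinal.{0}} (hg : GoodP lam θ α)
    (hγ : γ ∈ DD α) : GoodP lam θ γ := by
  obtain ⟨h1, h2, h3⟩ := hg
  have hD : DD γ = DD α ∩ Iio γ := h3 γ hγ
  refine ⟨?_, ?_, ?_⟩
  · rw [hD]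
    rintro x ⟨hx1, hx2⟩
    exact ⟨hx2, (h1 hx1).2⟩
  · refine lt_of_le_of_lt ?_ h2
    rw [hD]
    exact otp_mono inter_subset_left
  · intro ζ hζ
    rw [hD] at hζ
    obtain ⟨hζ1, hζ2⟩ := hζ
    rw [h3 ζ hζ1, hD, inter_assoc, inter_comm (Iio γ), inter_eq_self_of_subset_left
      (Iio_subset_Iio hζ2.le)]

open scoped Classical in
/-- The final sequence of sets. -/
def CC (lam θ : Cardinal.{0}) (α : Ordinal.{0}) : Set Ordinal.{0} :=
  if (θ.ord < α ∧ (beth α).ord = α ∧ α.cof = θ) ∧ α < lam.ord then xval α '' Iio θ.ord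
  else if GoodP lam θ α then DD α else ∅

theorem image_inter_Iio (α : Ordinal.{0}) {i o : Ordinal.{0}} (hio : i < o) :
    xval α '' Iio o ∩ Iio (xval α i) = xval α '' Iio i := by
  ext y
  constructor
  · rintro ⟨⟨j, hj, rfl⟩, hy⟩
    exact ⟨j, (xval_strictMono α).lt_iff_lt.1 hy, rfl⟩
  · rintro ⟨j, hj, rfl⟩
    exact ⟨⟨j, hj.trans hio, rfl⟩, xval_strictMono α hj⟩


end Sh906

/-- Shelah [Sh:906], ⊛₁ of the proof of Theorem 1.14: for `λ` strongly inaccessible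
and `θ < λ` regular uncountable there is a coherent ladder system `⟨C_α : α < λ⟩` with
`C_α ⊆ α ∩ S_*` (`S_* = {ℶ_{β+ω} : β < λ}`), `otp(C_α) ≤ θ`, `otp(C_α) = θ` exactly
when `α ∈ E_* = {δ : θ < δ = ℶ_δ}` has cofinality `θ`, and in that case
`sup(C_α) = α`. -/
theorem stmt10 (lam θ : Cardinal.{0}) (hlam : lam.IsInaccessible)
    (hθ : θ.IsRegular) (hθunc : ℵ₀ < θ) (hθlam : θ < lam) :
    ∃ C : Ordinal → Set Ordinal, ∀ α < lam.ord,
      (C α ⊆ {x | x < α ∧ ∃ β < lam.ord, x = (Cardinal.beth (β + Ordinal.omega0)).ord}) ∧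
      (∀ β ∈ C α, C β = C α ∩ Set.Iio β) ∧
      otp (C α) ≤ Ordinal.lift.{1} θ.ord ∧
      (otp (C α) = Ordinal.lift.{1} θ.ord ↔ (θ.ord < α ∧ (Cardinal.beth α).ord = α ∧ α.cof = θ)) ∧
      ((θ.ord < α ∧ (Cardinal.beth α).ord = α ∧ α.cof = θ) → sSup (C α) = α) := by
  open Sh906 in
  classical
  have hθpos : (0 : Ordinal) < θ.ord :=
    lt_of_lt_of_le omega0_pos (by rw [← ord_aleph0]; exact ord_le_ord.2 hθ.1)
  refine ⟨CC lam θ, fun α hα => ?_⟩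
  by_cases hE : θ.ord < α ∧ (beth α).ord = α ∧ α.cof = θ
  · have hCeq : CC lam θ α = xval α '' Iio θ.ord := by
      simp only [CC]
      rw [if_pos ⟨hE, hα⟩]
    obtain ⟨h1, h2, h3⟩ := hE
    have hwit : ∀ i, i < θ.ord →
        xval α i < α ∧ ∃ β < lam.ord, xval α i = (beth (β + omega0)).ord := by
      intro i hi
      refine ⟨xval_lt h2 h3 hi, ⟨codeP (pP α i), ?_, xval_eq α i⟩⟩
      exact lt_trans (lt_trans (codeP_pP_lt_xval α i) (xval_lt h2 h3 hi)) hα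
    rw [hCeq]
    refine ⟨?_, ?_, ?_, ?_, ?_⟩
    · rintro x ⟨i, hi, rfl⟩
      exact hwit i hi
    · rintro β ⟨i, hi, rfl⟩
      have hnotE : ¬(θ.ord < xval α i ∧ (beth (xval α i)).ord = xval α i ∧
          (xval α i).cof = θ) := not_E_fOrd (xval_eq α i)
      have hgood : GoodP lam θ (xval α i) := by
        refine ⟨?_, ?_, ?_⟩
        · rw [DD_xval]
          rintro x ⟨j, hj, rfl⟩
          exact ⟨xval_strictMono α hj, (hwit j (hj.trans hi)).2⟩
        · rw [DD_xval]
          have ho : otp (prefixSet α i) = Ordinal.lift.{1} i :=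
            otp_image_Iio ((xval_strictMono α).strictMonoOn _)
          rw [ho]
          exact Ordinal.lift_lt.2 hi
        · intro γ hγ
          rw [DD_xval] at hγ ⊢
          obtain ⟨j, hj, rfl⟩ := hγ
          rw [DD_xval]
          exact (image_inter_Iio α hj).symm
      calc CC lam θ (xval α i) = DD (xval α i) := by
            simp only [CC]
            rw [if_neg (fun hc => hnotE hc.1), if_pos hgood]
        _ = prefixSet α i := DD_xval α i
        _ = xval α '' Iio θ.ord ∩ Iio (xval α i) := (image_inter_Iio α hi).symm
    · rw [otp_image_Iio ((xval_strictMono α).strictMonoOn _)]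
    · rw [otp_image_Iio ((xval_strictMono α).strictMonoOn _)]
      exact ⟨fun _ => ⟨h1, h2, h3⟩, fun _ => rfl⟩
    · intro _
      have hne : (xval α '' Iio θ.ord).Nonempty := ⟨xval α 0, ⟨0, hθpos, rfl⟩⟩
      have hbdd : BddAbove (xval α '' Iio θ.ord) := by
        exact Ordinal.bddAbove_of_small
      refine le_antisymm (csSup_le hne ?_) ?_
      · rintro y ⟨i, hi, rfl⟩
        exact (xval_lt h2 h3 hi).le
      · by_contra hlt
        push_neg at hlt
        obtain ⟨i, hi, hle⟩ := le_xval h3 hlt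
        have hsucc : i + 1 < θ.ord := by
          rw [Ordinal.add_one_eq_succ]
          exact (isSuccLimit_ord hθ.1).succ_lt hi
        have hmem : xval α (i + 1) ≤ sSup (xval α '' Iio θ.ord) :=
          le_csSup hbdd ⟨i + 1, hsucc, rfl⟩
        exact lt_irrefl _
          (lt_of_lt_of_le (lt_of_le_of_lt hle (xval_strictMono α (lt_add_one i))) hmem)
  · have hCeq : CC lam θ α = if GoodP lam θ α then DD α else ∅ := by
      simp only [CC]
      rw [if_neg (fun hc => hE hc.1)]
    by_cases hG : GoodP lam θ α
    · rw [hCeq, if_pos hG]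
      obtain ⟨g1, g2, g3⟩ := hG
      refine ⟨?_, ?_, g2.le, ?_, ?_⟩
      · intro x hx
        exact ⟨(g1 hx).1, (g1 hx).2⟩
      · intro β hβ
        obtain ⟨hβα, hβS⟩ := g1 hβ
        obtain ⟨δ, hδ, hδeq⟩ := hβS
        have hnotE : ¬(θ.ord < β ∧ (beth β).ord = β ∧ β.cof = θ) := not_E_fOrd hδeq
        have hgood := GoodP_inherit ⟨g1, g2, g3⟩ hβ
        simp only [CC]
        rw [if_neg (fun hc => hnotE hc.1), if_pos hgood]
        exact g3 β hβ
      · exact ⟨fun h0 => absurd h0 g2.ne, fun hc => absurd hc hE⟩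
      · intro hc
        exact absurd hc hE
    · rw [hCeq, if_neg hG]
      refine ⟨empty_subset _, ?_, ?_, ?_, ?_⟩
      · intro β hβ
        exact absurd hβ (notMem_empty β)
      · rw [otp_empty]
        exact zero_le
      · constructor
        · intro h0
          rw [otp_empty] at h0
          have hpos : (0 : Ordinal.{1}) < Ordinal.lift.{1} θ.ord := by
            have := Ordinal.lift_lt.{1}.2 hθpos
            rwa [Ordinal.lift_zero] at this
          exact absurd h0.symm (ne_of_gt hpos)
        · intro hc
          exact absurd hc hE
      · intro hc
        exact absurd hc hE
end
end

section
/- Let λ and κ < λ be regular cardinals with λ^{<κ} = λ. Then there exists a sequence ⟨C*_α : α < λ⁺⟩ such that: (a) C*_α ⊆ α and every β ∈ C*_α satisfies β > sup(C*_α ∩ β); (b) otp(C*_α) ≤ κ; (c) if β ∈ C*_α then C*_β = C*_α ∩ β; (d) if λ divides α and cf(α) = κ then sup(C*_α) = α; and (e) if cf(α) ≠ κ then otp(C*_α) < κ. -/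
open Cardinal Set Ordinal

lemma otp_lt_ord {s : Set Ordinal.{0}} {kap : Cardinal.{0}}
    (h : #s < Cardinal.lift.{1} kap) : otp s < Ordinal.lift.{1} kap.ord := by
  rw [Cardinal.lift_ord, Cardinal.lt_ord, otp, Ordinal.card_type]
  exact h

lemma otp_Iio (o : Ordinal.{0}) : otp (Set.Iio o) = Ordinal.lift.{1} o := by
  letI : IsWellOrder o.ToType (· < ·) := isWellOrder_lt
  have e : ((· < ·) : (Set.Iio o) → (Set.Iio o) → Prop) ≃r
      ((· < ·) : o.ToType → o.ToType → Prop) :=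
    ⟨((Ordinal.ToType.mk (o := o))).toEquiv, by
      intro a b
      exact ((Ordinal.ToType.mk (o := o))).lt_iff_lt⟩
  have h2 : Ordinal.lift.{max 0 1}
        (Ordinal.type ((· < ·) : (Set.Iio o) → (Set.Iio o) → Prop))
      = Ordinal.lift.{max 1 1} (Ordinal.type ((· < ·) : o.ToType → o.ToType → Prop)) :=
    Ordinal.lift_type_eq.{1,0,1}.2 ⟨e⟩
  rw [Ordinal.type_toType] at h2
  rw [otp, ← Ordinal.lift_id (Ordinal.type _)]
  exact h2

lemma otp_eq_of_iso {s t : Set Ordinal.{0}} (e : s ≃o t) : otp s = otp t := by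
  refine RelIso.ordinal_type_eq ⟨e.toEquiv, ?_⟩
  intro a b
  exact e.lt_iff_lt

lemma exists_phi (lam kap : Cardinal.{0}) (hlam : lam.IsRegular) (hkap : kap.IsRegular)
    (hlt : kap < lam) (hpow : lam ^< kap = lam) :
    ∃ φ : Ordinal.{0} → Set Ordinal.{0} → Ordinal.{0},
      ∀ η, η.card ≤ lam → ∀ s, s ⊆ Set.Iio (lam.ord * η) → #s < Cardinal.lift.{1} kap →
        (lam.ord * η < φ η s ∧ φ η s < lam.ord * η + lam.ord) ∧
        ∀ t, t ⊆ Set.Iio (lam.ord * η) → #t < Cardinal.lift.{1} kap →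
          φ η s = φ η t → s = t := by
  classical
  have key : ∀ η : Ordinal.{0}, η.card ≤ lam → ∃ e : Set Ordinal.{0} → Ordinal.{0},
      (∀ s, s ⊆ Set.Iio (lam.ord * η) → #s < Cardinal.lift.{1} kap →
        (lam.ord * η < e s ∧ e s < lam.ord * η + lam.ord)) ∧
      (∀ s t, s ⊆ Set.Iio (lam.ord * η) → #s < Cardinal.lift.{1} kap →
        t ⊆ Set.Iio (lam.ord * η) → #t < Cardinal.lift.{1} kap → e s = e t → s = t) := by
    intro η hη
    set A : Set Ordinal.{0} := Set.Iio (lam.ord * η) with hA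
    set T : Set (Set Ordinal.{0}) := {s | s ⊆ A ∧ #s < Cardinal.lift.{1} kap} with hTdef
    have hAcard : #A ≤ Cardinal.lift.{1} lam := by
      rw [hA, Cardinal.mk_Iio_ordinal, Ordinal.card_mul, Cardinal.card_ord]
      refine Cardinal.lift_le.2 ?_
      calc lam * η.card ≤ lam * lam := mul_le_mul_right hη lam
        _ = lam := mul_eq_self hlam.aleph0_le
    have hT : #T ≤ Cardinal.lift.{1} lam := by
      have cover : T ⊆ ⋃ (c : ↥(Set.Iio kap)),
          {s : Set Ordinal.{0} | s ⊆ A ∧ #s ≤ Cardinal.lift.{1} c.1} := by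
        rintro s ⟨h1, h2⟩
        obtain ⟨c, hc, hce⟩ := Cardinal.lt_lift_iff.1 h2
        exact Set.mem_iUnion.2 ⟨⟨c, hc⟩, h1, hce.ge⟩
      refine (Cardinal.mk_le_mk_of_subset cover).trans ?_
      refine (Cardinal.mk_iUnion_le _).trans ?_
      have hind : #(↥(Set.Iio kap)) ≤ Cardinal.lift.{1} kap := by
        have : Function.Injective (fun c : ↥(Set.Iio kap) =>
            (⟨c.1.ord, Cardinal.ord_lt_ord.2 c.2⟩ : ↥(Set.Iio kap.ord))) := by
          intro a b hab
          exact Subtype.ext (Cardinal.ord_injective (congrArg Subtype.val hab))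
        refine (Cardinal.mk_le_of_injective this).trans ?_
        rw [Cardinal.mk_Iio_ordinal, Cardinal.card_ord]
      have hsup : ⨆ c : ↥(Set.Iio kap),
          #{s : Set Ordinal.{0} | s ⊆ A ∧ #s ≤ Cardinal.lift.{1} c.1} ≤
          Cardinal.lift.{1} lam := by
        haveI : Nonempty (↥(Set.Iio kap)) := ⟨⟨0, hkap.pos⟩⟩
        refine ciSup_le' fun c => ?_
        have h1 : #{s : Set Ordinal.{0} | s ⊆ A ∧ #s ≤ Cardinal.lift.{1} c.1} ≤
            (#A ⊔ ℵ₀) ^ (Cardinal.lift.{1} c.1) := Cardinal.mk_bounded_subset_le A _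
        refine h1.trans ?_
        have h2 : (#A ⊔ ℵ₀) ≤ Cardinal.lift.{1} lam := by
          refine sup_le hAcard ?_
          rw [← Cardinal.lift_aleph0.{1,0}]
          exact Cardinal.lift_le.2 hlam.aleph0_le
        refine (Cardinal.power_le_power_right h2).trans ?_
        rw [← Cardinal.lift_power]
        refine Cardinal.lift_le.2 ?_
        calc lam ^ c.1 ≤ lam ^< kap := Cardinal.le_powerlt lam c.2
          _ = lam := hpow
      calc #(↥(Set.Iio kap)) * ⨆ c : ↥(Set.Iio kap),
            #{s : Set Ordinal.{0} | s ⊆ A ∧ #s ≤ Cardinal.lift.{1} c.1}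
          ≤ Cardinal.lift.{1} kap * Cardinal.lift.{1} lam := mul_le_mul' hind hsup
        _ = Cardinal.lift.{1} (kap * lam) := (Cardinal.lift_mul _ _).symm
        _ = Cardinal.lift.{1} lam := by
            rw [Cardinal.mul_eq_max hkap.aleph0_le hlam.aleph0_le, max_eq_right hlt.le]
    have hI : Cardinal.lift.{1} lam ≤ #(Set.Ioo (lam.ord * η) (lam.ord * η + lam.ord)) := by
      have hinj : Function.Injective (fun x : ↥(Set.Iio lam.ord) =>
          (⟨lam.ord * η + (1 + x.1), by
            constructor
            · conv_lhs => rw [← add_zero (lam.ord * η)]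
              rw [add_lt_add_iff_left]
              exact lt_of_lt_of_le zero_lt_one le_self_add
            · rw [add_lt_add_iff_left, Cardinal.lt_ord, Ordinal.card_add, Ordinal.card_one]
              exact Cardinal.add_lt_of_lt hlam.aleph0_le
                (lt_of_lt_of_le Cardinal.one_lt_aleph0 hlam.aleph0_le)
                (Cardinal.lt_ord.1 x.2)⟩ :
            ↥(Set.Ioo (lam.ord * η) (lam.ord * η + lam.ord)))) := by
        intro a b hab
        have h1 : lam.ord * η + (1 + a.1) = lam.ord * η + (1 + b.1) :=
          congrArg Subtype.val hab
        have h2 : (1 : Ordinal) + a.1 = 1 + b.1 := (add_right_inj _).1 h1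
        exact Subtype.ext ((add_right_inj _).1 h2)
      have := Cardinal.mk_le_of_injective hinj
      rwa [Cardinal.mk_Iio_ordinal, Cardinal.card_ord] at this
    obtain ⟨f⟩ := (Cardinal.le_def _ _).1 (hT.trans hI)
    refine ⟨fun s => if h : s ∈ T then (f ⟨s, h⟩).1 else 0, ?_, ?_⟩
    · intro s hs hcard
      have hm : s ∈ T := ⟨hs, hcard⟩
      simp only [dif_pos hm]
      exact ⟨(f ⟨s, hm⟩).2.1, (f ⟨s, hm⟩).2.2⟩
    · intro s t hs hsc ht htc heq
      have hms : s ∈ T := ⟨hs, hsc⟩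
      have hmt : t ∈ T := ⟨ht, htc⟩
      simp only [dif_pos hms, dif_pos hmt] at heq
      have := f.injective (Subtype.ext heq)
      exact congrArg Subtype.val this
  refine ⟨fun η s => if h : η.card ≤ lam ∧ s ⊆ Set.Iio (lam.ord * η) ∧
      #s < Cardinal.lift.{1} kap then (key η h.1).choose s else 0, ?_⟩
  intro η hη s hs hcard
  have hm : η.card ≤ lam ∧ s ⊆ Set.Iio (lam.ord * η) ∧ #s < Cardinal.lift.{1} kap :=
    ⟨hη, hs, hcard⟩
  constructor
  · simp only [dif_pos hm]
    exact (key η hη).choose_spec.1 s hs hcard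
  · intro t ht htc heq
    have hmt : η.card ≤ lam ∧ t ⊆ Set.Iio (lam.ord * η) ∧ #t < Cardinal.lift.{1} kap :=
      ⟨hη, ht, htc⟩
    simp only [dif_pos hm, dif_pos hmt] at heq
    exact (key η hη).choose_spec.2 s t hs hcard ht htc heq
section Aux
variable (lam kap : Cardinal.{0}) (φ : Ordinal.{0} → Set Ordinal.{0} → Ordinal.{0})

def Good (β η : Ordinal.{0}) (s : Set Ordinal.{0}) : Prop :=
  η.card ≤ lam ∧ s ⊆ Set.Iio (lam.ord * η) ∧ #s < Cardinal.lift.{1} kap ∧ β = φ η s ∧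
  (∀ γ ∈ s, sSup (s ∩ Set.Iio γ) < γ) ∧
  (∀ γ ∈ s, ∃ η', η'.card ≤ lam ∧ (s ∩ Set.Iio γ) ⊆ Set.Iio (lam.ord * η') ∧
    #(↥(s ∩ Set.Iio γ)) < Cardinal.lift.{1} kap ∧ γ = φ η' (s ∩ Set.Iio γ))

variable {lam kap φ}

lemma good_unique
    (hφ : ∀ η, η.card ≤ lam → ∀ s, s ⊆ Set.Iio (lam.ord * η) →
        #s < Cardinal.lift.{1} kap →
        (lam.ord * η < φ η s ∧ φ η s < lam.ord * η + lam.ord) ∧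
        ∀ t, t ⊆ Set.Iio (lam.ord * η) → #t < Cardinal.lift.{1} kap →
          φ η s = φ η t → s = t)
    {β η₁ s₁ η₂ s₂} (h1 : Good lam kap φ β η₁ s₁) (h2 : Good lam kap φ β η₂ s₂) :
    s₁ = s₂ := by
  obtain ⟨h1c, h1s, h1m, h1e, -, -⟩ := h1
  obtain ⟨h2c, h2s, h2m, h2e, -, -⟩ := h2
  have hm1 := (hφ η₁ h1c s₁ h1s h1m).1
  have hm2 := (hφ η₂ h2c s₂ h2s h2m).1
  rw [← h1e] at hm1
  rw [← h2e] at hm2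
  have heq : η₁ = η₂ := by
    rcases lt_trichotomy η₁ η₂ with h | h | h
    · exfalso
      have : lam.ord * η₁ + lam.ord ≤ lam.ord * η₂ := by
        rw [← Ordinal.mul_succ]
        exact mul_le_mul_right (Order.succ_le_of_lt h) lam.ord
      exact absurd ((hm1.2.trans_le this).trans hm2.1) (lt_irrefl β)
    · exact h
    · exfalso
      have : lam.ord * η₂ + lam.ord ≤ lam.ord * η₁ := by
        rw [← Ordinal.mul_succ]
        exact mul_le_mul_right (Order.succ_le_of_lt h) lam.ord
      exact absurd ((hm2.2.trans_le this).trans hm1.1) (lt_irrefl β)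
  subst heq
  exact (hφ η₁ h1c s₁ h1s h1m).2 s₂ h2s h2m (h1e.symm.trans h2e)

lemma good_not_dvd (hL0 : (0 : Ordinal) < lam.ord)
    (hφ : ∀ η, η.card ≤ lam → ∀ s, s ⊆ Set.Iio (lam.ord * η) →
        #s < Cardinal.lift.{1} kap →
        (lam.ord * η < φ η s ∧ φ η s < lam.ord * η + lam.ord) ∧
        ∀ t, t ⊆ Set.Iio (lam.ord * η) → #t < Cardinal.lift.{1} kap →
          φ η s = φ η t → s = t)
    {β η s} (h : Good lam kap φ β η s) : ¬ lam.ord ∣ β := by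
  rintro ⟨ζ, hζ⟩
  obtain ⟨hc, hs, hm, he, -, -⟩ := h
  have hmm := (hφ η hc s hs hm).1
  rw [← he] at hmm
  have h1 : η < ζ := lt_of_not_ge fun hh => absurd (mul_le_mul_right hh lam.ord) (not_le.2 (hζ ▸ hmm.1 : lam.ord * η < lam.ord * ζ))
  have h2 : lam.ord * η + lam.ord ≤ lam.ord * ζ := by
    rw [← Ordinal.mul_succ]
    exact mul_le_mul_right (Order.succ_le_of_lt h1) lam.ord
  exact absurd ((hζ ▸ hmm.2).trans_le h2) (lt_irrefl _)

lemma good_inherit {β η s γ} (h : Good lam kap φ β η s) (hγ : γ ∈ s) :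
    ∃ η', Good lam kap φ γ η' (s ∩ Set.Iio γ) := by
  obtain ⟨-, -, -, -, hnacc, hher⟩ := h
  obtain ⟨η', h1, h2, h3, h4⟩ := hher γ hγ
  have hss : ∀ δ, δ ∈ s ∩ Set.Iio γ → (s ∩ Set.Iio γ) ∩ Set.Iio δ = s ∩ Set.Iio δ := by
    intro δ hδ
    ext x
    constructor
    · rintro ⟨⟨hx, -⟩, hxd⟩
      exact ⟨hx, hxd⟩
    · rintro ⟨hx, hxd⟩
      exact ⟨⟨hx, Set.mem_Iio.2 ((Set.mem_Iio.1 hxd).trans hδ.2)⟩, hxd⟩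
  refine ⟨η', h1, h2, h3, h4, ?_, ?_⟩
  · intro δ hδ
    rw [hss δ hδ]
    exact hnacc δ hδ.1
  · intro δ hδ
    obtain ⟨η'', g1, g2, g3, g4⟩ := hher δ hδ.1
    exact ⟨η'', g1, by rw [hss δ hδ]; exact g2, by rw [hss δ hδ]; exact g3,
      by rw [hss δ hδ]; exact g4⟩


noncomputable def sqE (lam : Cardinal.{0}) (F : Ordinal → Ordinal) (i : Ordinal)
    (s : Set Ordinal) : Ordinal :=
  sInf {η | sSup s ⊔ F i < lam.ord * η}

noncomputable def sqF (lam : Cardinal.{0}) (φ : Ordinal → Set Ordinal → Ordinal)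
    (F : Ordinal → Ordinal) : Ordinal → Ordinal :=
  Ordinal.lt_wf.fix fun i IH =>
    φ (sqE lam F i {x | ∃ j, ∃ h : j < i, IH j h = x}) {x | ∃ j, ∃ h : j < i, IH j h = x}

lemma sqF_eq (lam : Cardinal.{0}) (φ : Ordinal → Set Ordinal → Ordinal)
    (F : Ordinal → Ordinal) (i : Ordinal) :
    sqF lam φ F i = φ (sqE lam F i (sqF lam φ F '' Set.Iio i)) (sqF lam φ F '' Set.Iio i) := by
  have h : sqF lam φ F i =
      φ (sqE lam F i {x | ∃ j, ∃ h : j < i, sqF lam φ F j = x})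
        {x | ∃ j, ∃ h : j < i, sqF lam φ F j = x} :=
    WellFounded.fix_eq _ _ _
  have himg : {x | ∃ j, ∃ h : j < i, sqF lam φ F j = x} = sqF lam φ F '' Set.Iio i := by
    ext x
    simp only [Set.mem_image, Set.mem_setOf_eq, Set.mem_Iio]
    exact ⟨fun ⟨j, hj, hx⟩ => ⟨j, hj, hx⟩, fun ⟨j, hj, hx⟩ => ⟨j, hj, hx⟩⟩
  rw [himg] at h
  exact h

lemma build (lam kap : Cardinal.{0}) (hlam : lam.IsRegular) (hkap : kap.IsRegular)
    (hlt : kap < lam)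
    (φ : Ordinal.{0} → Set Ordinal.{0} → Ordinal.{0})
    (hφ : ∀ η, η.card ≤ lam → ∀ s, s ⊆ Set.Iio (lam.ord * η) →
        #s < Cardinal.lift.{1} kap →
        (lam.ord * η < φ η s ∧ φ η s < lam.ord * η + lam.ord) ∧
        ∀ t, t ⊆ Set.Iio (lam.ord * η) → #t < Cardinal.lift.{1} kap →
          φ η s = φ η t → s = t)
    (α : Ordinal) (hα : α < (Order.succ lam).ord) (hdvd : lam.ord ∣ α)
    (hcf : α.cof = kap) (h0 : α ≠ 0)
    (F : Ordinal → Ordinal) (hF1 : ∀ j < kap.ord, F j < α)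
    (hF2 : ∀ x < α, ∃ j < kap.ord, x ≤ F j) :
    ∀ i < kap.ord,
      (sqE lam F i (sqF lam φ F '' Set.Iio i)).card ≤ lam ∧
      (sqF lam φ F '' Set.Iio i) ⊆ Set.Iio (lam.ord * sqE lam F i (sqF lam φ F '' Set.Iio i)) ∧
      #(↥(sqF lam φ F '' Set.Iio i)) < Cardinal.lift.{1} kap ∧
      sqF lam φ F i = φ (sqE lam F i (sqF lam φ F '' Set.Iio i)) (sqF lam φ F '' Set.Iio i) ∧
      lam.ord * sqE lam F i (sqF lam φ F '' Set.Iio i) < sqF lam φ F i ∧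
      sqF lam φ F i < lam.ord * sqE lam F i (sqF lam φ F '' Set.Iio i) + lam.ord ∧
      lam.ord * sqE lam F i (sqF lam φ F '' Set.Iio i) + lam.ord ≤ α ∧
      sSup (sqF lam φ F '' Set.Iio i) ⊔ F i < lam.ord * sqE lam F i (sqF lam φ F '' Set.Iio i) := by
  have hL0 : (0 : Ordinal) < lam.ord := by
    rw [← Cardinal.ord_zero]
    exact Cardinal.ord_lt_ord.2 hlam.pos
  obtain ⟨ξ, hξ⟩ := hdvd
  have hξ0 : ξ ≠ 0 := by
    rintro rfl
    rw [mul_zero] at hξ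
    exact h0 hξ
  have hξlim : Order.IsSuccLimit ξ := by
    rcases Ordinal.zero_or_succ_or_isSuccLimit ξ with h | ⟨a, ha⟩ | h
    · exact absurd h hξ0
    · exfalso
      rw [← ha, Ordinal.mul_succ] at hξ
      have : α.cof = lam.ord.cof := by rw [hξ]; exact Ordinal.cof_add _ hL0.ne'
      rw [hcf, hlam.cof_eq] at this
      exact hlt.ne this
    · exact h
  have hcard_le : ∀ x : Ordinal, x < α → x.card ≤ lam := by
    intro x hx
    have := Cardinal.lt_ord.1 (hx.trans hα)
    exact Order.lt_succ_iff.1 this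
  have hξα : ξ ≤ α := by
    rw [hξ]
    exact Ordinal.le_mul_right ξ hL0
  intro i
  induction i using Ordinal.induction with
  | _ i IH =>
  intro hi
  set c := sqF lam φ F with hc
  set S := c '' Set.Iio i with hS
  have hjlt : ∀ j < i, c j < α := by
    intro j hj
    obtain ⟨_, _, _, _, _, h6, h7, _⟩ := IH j hj (hj.trans hi)
    exact h6.trans_le h7
  have hSsub : S ⊆ Set.Iio α := by
    rintro x ⟨j, hj, rfl⟩
    exact hjlt j hj
  have hbdd : BddAbove S := ⟨α, fun x hx => (hSsub hx).le⟩
  have hScard : #(↥S) < Cardinal.lift.{1} kap := by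
    calc #(↥S) ≤ #(↥(Set.Iio i)) := Cardinal.mk_image_le
      _ = Cardinal.lift.{1} i.card := Cardinal.mk_Iio_ordinal i
      _ < Cardinal.lift.{1} kap := Cardinal.lift_lt.2 (Cardinal.lt_ord.1 hi)
  have hsup_lt : sSup S < α := by
    rcases eq_or_ne i 0 with rfl | hi0
    · have : S = ∅ := by
        rw [hS, Set.eq_empty_iff_forall_notMem]
        rintro x ⟨j, hj, rfl⟩
        exact absurd hj (not_lt_of_ge (zero_le (a := j)))
      rw [this, csSup_empty]
      exact pos_iff_ne_zero.2 h0
    · have himg : S = Set.range (fun x : i.ToType => c (((Ordinal.ToType.mk (o := i))).symm x).1) := by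
        ext y
        constructor
        · rintro ⟨j, hj, rfl⟩
          exact ⟨(Ordinal.ToType.mk (o := i)) ⟨j, hj⟩, by simp⟩
        · rintro ⟨x, rfl⟩
          exact ⟨_, (((Ordinal.ToType.mk (o := i))).symm x).2, rfl⟩
      rw [himg, sSup_range]
      refine Ordinal.iSup_lt_ord_lift ?_ ?_
      · rw [Cardinal.mk_toType, Cardinal.lift_id, hcf]
        exact Cardinal.lt_ord.1 hi
      · intro x
        exact hjlt _ (((Ordinal.ToType.mk (o := i))).symm x).2
  have hb : sSup S ⊔ F i < α := sup_lt_iff.2 ⟨hsup_lt, hF1 i hi⟩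
  obtain ⟨ηw, hηw, hbw⟩ := (Ordinal.lt_mul_iff_of_isSuccLimit hξlim).1 (by rw [← hξ]; exact hb)
  set η := sqE lam F i S with hηdef
  have hne : Set.Nonempty {η' : Ordinal | sSup S ⊔ F i < lam.ord * η'} := ⟨ηw, hbw⟩
  have hmem : sSup S ⊔ F i < lam.ord * η := csInf_mem hne
  have hle : η ≤ ηw :=
    csInf_le (OrderBot.bddBelow _) (show ηw ∈ {η' : Ordinal | sSup S ⊔ F i < lam.ord * η'} from hbw)
  have hηξ : η < ξ := hle.trans_lt hηw
  have hLle : lam.ord * η + lam.ord ≤ α := by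
    rw [← Ordinal.mul_succ, hξ]
    exact mul_le_mul_right (Order.succ_le_of_lt hηξ) lam.ord
  have hηcard : η.card ≤ lam := hcard_le η (hηξ.trans_le hξα)
  have hSsubL : S ⊆ Set.Iio (lam.ord * η) := by
    intro x hx
    exact lt_of_le_of_lt (le_trans (le_csSup hbdd hx) le_sup_left) hmem
  obtain ⟨hmemIoo, _⟩ := hφ η hηcard S hSsubL hScard
  have hceq : c i = φ η S := sqF_eq lam φ F i
  refine ⟨hηcard, hSsubL, hScard, hceq, ?_, ?_, hLle, hmem⟩
  · rw [hceq]; exact hmemIoo.1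
  · rw [hceq]; exact hmemIoo.2

/-- Shelah [Sh:906]: for regular `κ < λ` with `λ^{<κ} = λ` there is a coherent partial
square sequence `⟨C*_α : α < λ⁺⟩`: `C*_α ⊆ nacc(α)`, `otp(C*_α) ≤ κ`, coherent, with
`sup(C*_α) = α` whenever `λ ∣ α` and `cf(α) = κ`, and `otp(C*_α) < κ` when
`cf(α) ≠ κ`. -/
theorem stmt11 (lam kap : Cardinal.{0}) (hlam : lam.IsRegular)
    (hkap : kap.IsRegular) (hlt : kap < lam) (hpow : lam ^< kap = lam) :
    ∃ C : Ordinal → Set Ordinal, ∀ α < (Order.succ lam).ord,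
      (C α ⊆ Set.Iio α) ∧
      (∀ β ∈ C α, sSup (C α ∩ Set.Iio β) < β ∨ C α ∩ Set.Iio β = ∅) ∧
      otp (C α) ≤ Ordinal.lift.{1} kap.ord ∧
      (∀ β ∈ C α, C β = C α ∩ Set.Iio β) ∧
      ((lam.ord ∣ α ∧ α.cof = kap) → sSup (C α) = α) ∧
      (α.cof ≠ kap → otp (C α) < Ordinal.lift.{1} kap.ord) := by
  classical
  obtain ⟨φ, hφ⟩ := exists_phi lam kap hlam hkap hlt hpow
  have hL0 : (0 : Ordinal) < lam.ord := by
    rw [← Cardinal.ord_zero]; exact Cardinal.ord_lt_ord.2 hlam.pos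
  have hk0 : (0 : Ordinal) < kap.ord := by
    rw [← Cardinal.ord_zero]; exact Cardinal.ord_lt_ord.2 hkap.pos
  have hFex : ∀ a : Ordinal.{0}, ∃ Fa : Ordinal → Ordinal, (a ≠ 0 ∧ a.cof = kap) →
      ((∀ j < kap.ord, Fa j < a) ∧ ∀ x < a, ∃ j < kap.ord, x ≤ Fa j) := by
    intro a
    by_cases h : a ≠ 0 ∧ a.cof = kap
    · obtain ⟨ι, f, hlsub, hι⟩ := Ordinal.exists_lsub_cof a
      have e : ι ≃ kap.ord.ToType :=
        Classical.choice (Cardinal.eq.1 (by rw [hι, h.2, Cardinal.mk_ord_toType]))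
      refine ⟨fun j => if hj : j < kap.ord then
          f (e.symm ((Ordinal.ToType.mk (o := kap.ord)) ⟨j, hj⟩)) else 0, fun _ => ⟨?_, ?_⟩⟩
      · intro j hj
        simp only [dif_pos hj]
        rw [← hlsub]
        exact Ordinal.lt_lsub f _
      · intro x hx
        rw [← hlsub] at hx
        obtain ⟨i, hi⟩ := Ordinal.lt_lsub_iff.1 hx
        have hj' : (((Ordinal.ToType.mk (o := kap.ord))).symm (e i)).1 < kap.ord :=
          (((Ordinal.ToType.mk (o := kap.ord))).symm (e i)).2
        refine ⟨_, hj', ?_⟩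
        simp only [dif_pos hj']
        have hz : (⟨(((Ordinal.ToType.mk (o := kap.ord))).symm (e i)).1, hj'⟩ :
            ↥(Set.Iio kap.ord)) = ((Ordinal.ToType.mk (o := kap.ord))).symm (e i) := rfl
        rw [hz, OrderIso.apply_symm_apply, Equiv.symm_apply_apply]
        exact hi
    · exact ⟨fun _ => 0, fun hcon => absurd hcon h⟩
  choose F hF using hFex
  set C : Ordinal → Set Ordinal := fun β =>
    if h : ∃ p : Ordinal × Set Ordinal, Good lam kap φ β p.1 p.2 then h.choose.2
    else if lam.ord ∣ β ∧ β.cof = kap ∧ β ≠ 0 ∧ β < (Order.succ lam).ord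
      then sqF lam φ (F β) '' Set.Iio kap.ord else ∅ with hCdef
  have hCgood : ∀ β η s, Good lam kap φ β η s → C β = s := by
    intro β η s hg
    have hex : ∃ p : Ordinal × Set Ordinal, Good lam kap φ β p.1 p.2 := ⟨(η, s), hg⟩
    rw [hCdef]
    simp only [dif_pos hex]
    exact good_unique hφ hex.choose_spec hg
  have hCtarget : ∀ a : Ordinal, lam.ord ∣ a → a.cof = kap → a ≠ 0 →
      a < (Order.succ lam).ord → C a = sqF lam φ (F a) '' Set.Iio kap.ord := by
    intro a h1 h2 h3 h4
    have hng : ¬ ∃ p : Ordinal × Set Ordinal, Good lam kap φ a p.1 p.2 := by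
      rintro ⟨p, hp⟩
      exact good_not_dvd hL0 hφ hp h1
    rw [hCdef]
    simp only [dif_neg hng, if_pos (⟨h1, h2, h3, h4⟩ :
      lam.ord ∣ a ∧ a.cof = kap ∧ a ≠ 0 ∧ a < (Order.succ lam).ord)]
  refine ⟨C, ?_⟩
  intro α hα
  by_cases hg : ∃ p : Ordinal × Set Ordinal, Good lam kap φ α p.1 p.2
  · obtain ⟨⟨η, s⟩, hgood⟩ := hg
    have hCα : C α = s := hCgood α η s hgood
    obtain ⟨g1, g2, g3, g4, g5, g6⟩ := hgood
    have hm := (hφ η g1 s g2 g3).1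
    rw [← g4] at hm
    rw [hCα]
    refine ⟨?_, ?_, ?_, ?_, ?_, ?_⟩
    · intro x hx
      exact Set.mem_Iio.2 ((Set.mem_Iio.1 (g2 hx)).trans hm.1)
    · intro β hβ
      exact Or.inl (g5 β hβ)
    · exact (otp_lt_ord g3).le
    · intro β hβ
      obtain ⟨η', hg'⟩ := good_inherit ⟨g1, g2, g3, g4, g5, g6⟩ hβ
      exact hCgood β η' _ hg'
    · rintro ⟨hdvd', -⟩
      exact absurd hdvd' (good_not_dvd hL0 hφ ⟨g1, g2, g3, g4, g5, g6⟩)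
    · intro _
      exact otp_lt_ord g3
  · by_cases ht : lam.ord ∣ α ∧ α.cof = kap ∧ α ≠ 0 ∧ α < (Order.succ lam).ord
    · obtain ⟨h1, h2, h3, h4⟩ := ht
      obtain ⟨hF1, hF2⟩ := hF α ⟨h3, h2⟩
      set c := sqF lam φ (F α) with hc
      have P := build lam kap hlam hkap hlt φ hφ α h4 h1 h2 h3 (F α) hF1 hF2
      have Pc : ∀ j < kap.ord, c j < α := fun j hj =>
        ((P j hj).2.2.2.2.2.1).trans_le (P j hj).2.2.2.2.2.2.1
      have hmono : ∀ j i, j < i → i < kap.ord → c j < c i := by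
        intro j i hj hi
        have hb : BddAbove (c '' Set.Iio i) :=
          ⟨α, by rintro x ⟨k, hk, rfl⟩; exact (Pc k (hk.trans hi)).le⟩
        have hh1 : c j ≤ sSup (c '' Set.Iio i) := le_csSup hb ⟨j, hj, rfl⟩
        exact ((hh1.trans le_sup_left).trans_lt (P i hi).2.2.2.2.2.2.2).trans
          (P i hi).2.2.2.2.1
      have hinter : ∀ i j, i ≤ kap.ord → j < i →
          (c '' Set.Iio i) ∩ Set.Iio (c j) = c '' Set.Iio j := by
        intro i j hik hj
        ext x
        constructor
        · rintro ⟨⟨k, hk, rfl⟩, hck⟩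
          have hck' : c k < c j := Set.mem_Iio.1 hck
          rcases lt_or_ge k j with h | h
          · exact ⟨k, h, rfl⟩
          · exfalso
            rcases h.lt_or_eq with h' | h'
            · exact absurd (hmono j k h' (hk.trans_le hik)) (asymm hck')
            · rw [← h'] at hck'
              exact lt_irrefl _ hck'
        · rintro ⟨k, hk, rfl⟩
          exact ⟨⟨k, hk.trans hj, rfl⟩, Set.mem_Iio.2 (hmono k j hk (hj.trans_le hik))⟩
      have hGood : ∀ i, i < kap.ord →
          Good lam kap φ (c i) (sqE lam (F α) i (c '' Set.Iio i)) (c '' Set.Iio i) := by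
        intro i hi
        obtain ⟨q1, q2, q3, q4, q5, q6, q7, q8⟩ := P i hi
        refine ⟨q1, q2, q3, q4, ?_, ?_⟩
        · rintro γ ⟨j, hj, rfl⟩
          rw [hinter i j hi.le hj]
          exact (le_sup_left.trans_lt (P j (hj.trans hi)).2.2.2.2.2.2.2).trans
            (P j (hj.trans hi)).2.2.2.2.1
        · rintro γ ⟨j, hj, rfl⟩
          obtain ⟨r1, r2, r3, r4, -, -, -, -⟩ := P j (hj.trans hi)
          exact ⟨sqE lam (F α) j (c '' Set.Iio j), r1,
            by rw [hinter i j hi.le hj]; exact r2,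
            by rw [hinter i j hi.le hj]; exact r3,
            by rw [hinter i j hi.le hj]; exact r4⟩
      have hCα : C α = c '' Set.Iio kap.ord := hCtarget α h1 h2 h3 h4
      rw [hCα]
      have hbddK : BddAbove (c '' Set.Iio kap.ord) :=
        ⟨α, by rintro x ⟨k, hk, rfl⟩; exact (Pc k hk).le⟩
      refine ⟨?_, ?_, ?_, ?_, ?_, ?_⟩
      · rintro x ⟨i, hi, rfl⟩
        exact Set.mem_Iio.2 (Pc i hi)
      · rintro β ⟨i, hi, rfl⟩
        left
        rw [hinter kap.ord i le_rfl hi]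
        exact (le_sup_left.trans_lt (P i hi).2.2.2.2.2.2.2).trans (P i hi).2.2.2.2.1
      · have hOI : otp (c '' Set.Iio kap.ord) = Ordinal.lift.{1} kap.ord := by
          refine Eq.trans (otp_eq_of_iso ?_) (otp_Iio kap.ord)
          exact (StrictMono.orderIsoOfSurjective
            (fun x : ↥(Set.Iio kap.ord) =>
              (⟨c x.1, ⟨x.1, x.2, rfl⟩⟩ : ↥(c '' Set.Iio kap.ord)))
            (fun x y hxy => Subtype.mk_lt_mk.2 (hmono x.1 y.1 hxy y.2))
            (by rintro ⟨y, i, hi, rfl⟩; exact ⟨⟨i, hi⟩, rfl⟩)).symm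
        rw [hOI]
      · rintro β ⟨i, hi, rfl⟩
        rw [hinter kap.ord i le_rfl hi]
        exact hCgood _ _ _ (hGood i hi)
      · intro _
        refine le_antisymm ?_ ?_
        · refine csSup_le ⟨c 0, ⟨0, hk0, rfl⟩⟩ ?_
          rintro x ⟨i, hi, rfl⟩
          exact (Pc i hi).le
        · refine le_of_forall_lt ?_
          intro x hx
          obtain ⟨j, hjk, hxF⟩ := hF2 x hx
          have hFc : F α j < c j :=
            (le_sup_right.trans_lt (P j hjk).2.2.2.2.2.2.2).trans (P j hjk).2.2.2.2.1
          exact (hxF.trans_lt hFc).trans_le (le_csSup hbddK ⟨j, hjk, rfl⟩)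
      · intro hne
        exact absurd h2 hne
    · have hCα : C α = ∅ := by
        rw [hCdef]; simp only [dif_neg hg, if_neg ht]
      have hotp : otp (∅ : Set Ordinal) < Ordinal.lift.{1} kap.ord := by
        refine otp_lt_ord ?_
        rw [Cardinal.mk_emptyCollection]
        have hl : Cardinal.lift.{1,0} 0 < Cardinal.lift.{1,0} kap :=
          Cardinal.lift_lt.2 hkap.pos
        simpa using hl
      rw [hCα]
      refine ⟨by simp, by simp, hotp.le, by simp, ?_, fun _ => hotp⟩
      rintro ⟨hdvd', hcf'⟩
      have h3 : α ≠ 0 := by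
        rintro rfl
        rw [Ordinal.cof_zero] at hcf'
        exact hkap.pos.ne hcf'
      exact absurd ⟨hdvd', hcf', h3, hα⟩ ht
end Aux
end

section
/- Let B^c_λ be the completion of the free Boolean algebra on generators ⟨e_α : α < λ⟩, and let D_* be an ultrafilter of B^c_λ with e_α ∉ D_* for all α < λ. Then for every η : λ → 2 there exists an ultrafilter D_η of B^c_λ such that: (a) e_α ∈ D_η whenever η(α) = 1, and (b) every e ∈ D_* lying in the complete subalgebra B^c_{λ, η⁻¹{0}} generated by {e_α : η(α) = 0} belongs to D_η. Moreover, if η is constantly zero then D_η = D_*, and for every η and every α < λ, e_α ∈ D_η if and only if η(α) = 1. -/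
open Set

/-- `x` belongs to the complete subalgebra of `B` completely generated by `s`. -/
def MemCompleteSub {B : Type*} [CompleteBooleanAlgebra B] (s : Set B) (x : B) : Prop :=
  ∀ t : Set B, s ⊆ t → (∀ u : Set B, u ⊆ t → sSup u ∈ t) →
    (∀ u : Set B, u ⊆ t → sInf u ∈ t) → (∀ a ∈ t, aᶜ ∈ t) → x ∈ t

namespace Stmt14Aux

set_option linter.unusedSectionVars false
set_option linter.unusedVariables false

variable {ι B : Type*} [CompleteBooleanAlgebra B] [DecidableEq ι]

/-- the elementary element determined by a pair of finite sets of indices -/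
def A (e : ι → B) (p : Finset ι × Finset ι) : B :=
  p.1.inf e ⊓ p.2.inf fun t => (e t)ᶜ

lemma A_inf (e : ι → B) (p q : Finset ι × Finset ι) :
    A e p ⊓ A e q = A e (p.1 ∪ q.1, p.2 ∪ q.2) := by
  simp only [A, Finset.inf_union]
  exact inf_inf_inf_comm _ _ _ _

lemma A_le_fst (e : ι → B) {p : Finset ι × Finset ι} {γ : ι} (h : γ ∈ p.1) :
    A e p ≤ e γ := le_trans inf_le_left (Finset.inf_le h)

lemma A_le_snd (e : ι → B) {p : Finset ι × Finset ι} {γ : ι} (h : γ ∈ p.2) :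
    A e p ≤ (e γ)ᶜ := le_trans inf_le_right (Finset.inf_le h)

lemma A_eq_bot (e : ι → B) {p : Finset ι × Finset ι} (h : ¬ Disjoint p.1 p.2) :
    A e p = ⊥ := by
  rw [Finset.not_disjoint_iff] at h
  obtain ⟨γ, h1, h2⟩ := h
  exact le_bot_iff.mp (by
    calc A e p ≤ e γ ⊓ (e γ)ᶜ := le_inf (A_le_fst e h1) (A_le_snd e h2)
    _ = ⊥ := inf_compl_eq_bot)

lemma A_mono (e : ι → B) {p q : Finset ι × Finset ι} (h1 : q.1 ⊆ p.1) (h2 : q.2 ⊆ p.2) :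
    A e p ≤ A e q := inf_le_inf (Finset.inf_mono h1) (Finset.inf_mono h2)

/-- flip the generator `β` -/
def flp (β : ι) (p : Finset ι × Finset ι) : Finset ι × Finset ι :=
  (p.1.erase β ∪ p.2.filter (· = β), p.2.erase β ∪ p.1.filter (· = β))

lemma mem_flp_fst {β γ : ι} {p : Finset ι × Finset ι} :
    γ ∈ (flp β p).1 ↔ (γ ∈ p.1 ∧ γ ≠ β) ∨ (γ ∈ p.2 ∧ γ = β) := by
  simp [flp, Finset.mem_erase, Finset.mem_filter, and_comm]

lemma mem_flp_snd {β γ : ι} {p : Finset ι × Finset ι} :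
    γ ∈ (flp β p).2 ↔ (γ ∈ p.2 ∧ γ ≠ β) ∨ (γ ∈ p.1 ∧ γ = β) := by
  simp [flp, Finset.mem_erase, Finset.mem_filter, and_comm]

lemma flp_flp (β : ι) (p : Finset ι × Finset ι) : flp β (flp β p) = p := by
  ext γ
  · simp only [mem_flp_fst, mem_flp_snd]
    by_cases h : γ = β <;> simp [h]
  · simp only [mem_flp_fst, mem_flp_snd]
    by_cases h : γ = β <;> simp [h]

lemma flp_disjoint {β : ι} {p : Finset ι × Finset ι} (h : Disjoint p.1 p.2) :
    Disjoint (flp β p).1 (flp β p).2 := by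
  rw [Finset.disjoint_left] at h ⊢
  intro γ h1 h2
  rw [mem_flp_fst] at h1; rw [mem_flp_snd] at h2
  rcases h1 with ⟨h1, hne⟩ | ⟨h1, he⟩ <;> rcases h2 with ⟨h2, hne'⟩ | ⟨h2, he'⟩
  · exact h h1 h2
  · exact hne he'
  · exact hne' he
  · exact h h2 h1

lemma flp_mono {β : ι} {p q : Finset ι × Finset ι} (h1 : q.1 ⊆ p.1) (h2 : q.2 ⊆ p.2) :
    (flp β q).1 ⊆ (flp β p).1 ∧ (flp β q).2 ⊆ (flp β p).2 := by
  constructor <;> intro γ hγ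
  · rw [mem_flp_fst] at hγ ⊢
    rcases hγ with ⟨h, hne⟩ | ⟨h, he⟩
    · exact Or.inl ⟨h1 h, hne⟩
    · exact Or.inr ⟨h2 h, he⟩
  · rw [mem_flp_snd] at hγ ⊢
    rcases hγ with ⟨h, hne⟩ | ⟨h, he⟩
    · exact Or.inl ⟨h2 h, hne⟩
    · exact Or.inr ⟨h1 h, he⟩

lemma flp_union (β : ι) (p q : Finset ι × Finset ι) :
    flp β (p.1 ∪ q.1, p.2 ∪ q.2)
      = ((flp β p).1 ∪ (flp β q).1, (flp β p).2 ∪ (flp β q).2) := by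
  have e1 : (flp β (p.1 ∪ q.1, p.2 ∪ q.2)).1 = (flp β p).1 ∪ (flp β q).1 := by
    ext γ
    simp only [Finset.mem_union, mem_flp_fst, Finset.mem_union]
    tauto
  have e2 : (flp β (p.1 ∪ q.1, p.2 ∪ q.2)).2 = (flp β p).2 ∪ (flp β q).2 := by
    ext γ
    simp only [Finset.mem_union, mem_flp_snd, Finset.mem_union]
    tauto
  exact Prod.ext e1 e2

lemma flp_disjoint_iff {β : ι} {p : Finset ι × Finset ι} :
    Disjoint (flp β p).1 (flp β p).2 ↔ Disjoint p.1 p.2 := by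
  constructor
  · intro h
    have := flp_disjoint (β := β) h
    rwa [flp_flp] at this
  · exact flp_disjoint

lemma compl_finset_inf (s : Finset ι) (f : ι → B) :
    (s.inf f)ᶜ = s.sup fun γ => (f γ)ᶜ := by
  induction s using Finset.induction with
  | empty => simp
  | @insert _ _ h ih => simp [Finset.inf_insert, Finset.sup_insert, ih]

lemma finsup_inf_finsup (e : ι → B) (t1 t2 : Finset (Finset ι × Finset ι)) :
    ∃ t3 : Finset (Finset ι × Finset ι),
      (t1.sup (A e)) ⊓ (t2.sup (A e)) = t3.sup (A e) := by
  induction t1 using Finset.induction with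
  | empty => exact ⟨∅, by simp⟩
  | @insert p t1 h ih =>
    obtain ⟨t', ht'⟩ := ih
    refine ⟨(t2.image fun q => (p.1 ∪ q.1, p.2 ∪ q.2)) ∪ t', ?_⟩
    rw [Finset.sup_insert, inf_sup_right, ht', Finset.sup_union, Finset.sup_image]
    congr 1
    rw [Finset.sup_inf_distrib_left]
    exact Finset.sup_congr rfl fun q _ => A_inf e p q

lemma compl_A (e : ι → B) (p : Finset ι × Finset ι) :
    (A e p)ᶜ = ((p.1.image fun γ => ((∅ : Finset ι), ({γ} : Finset ι))) ∪
      (p.2.image fun γ => (({γ} : Finset ι), (∅ : Finset ι)))).sup (A e) := by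
  rw [Finset.sup_union, Finset.sup_image, Finset.sup_image]
  simp only [A, compl_inf, compl_finset_inf]
  congr 1
  · apply Finset.sup_congr rfl
    intro γ _
    simp [Function.comp, A]
  · rw [Finset.sup_congr rfl fun γ _ => compl_compl (e γ)]
    apply Finset.sup_congr rfl
    intro γ _
    simp [Function.comp, A]

/-- every element of the subalgebra generated by the range of `e` is a finite
join of elementary elements -/
lemma memSub_rep {e : ι → B} {y : B} (hy : MemSub (Set.range e) y) :
    ∃ t : Finset (Finset ι × Finset ι), y = t.sup (A e) := by
  apply hy {z | ∃ t : Finset (Finset ι × Finset ι), z = t.sup (A e)}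
  · rintro _ ⟨α, rfl⟩
    exact ⟨{({α}, ∅)}, by simp [A]⟩
  · exact ⟨{(∅, ∅)}, by simp [A]⟩
  · rintro a ⟨t, rfl⟩
    induction t using Finset.induction with
    | empty => exact ⟨{(∅, ∅)}, by simp [A]⟩
    | @insert p t h ih =>
      obtain ⟨t', ht'⟩ := ih
      rw [Finset.sup_insert, compl_sup, ht', compl_A]
      exact finsup_inf_finsup e _ _
  · rintro a ⟨t1, rfl⟩ b ⟨t2, rfl⟩
    exact ⟨t1 ∪ t2, by rw [Finset.sup_union]⟩

variable {e : ι → B}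
  (hfree : ∀ u v : Finset ι, Disjoint u v → ⊥ < u.inf e ⊓ v.inf fun t => (e t)ᶜ)
  (hdense : ∀ x : B, x ≠ ⊥ → ∃ y, y ≠ ⊥ ∧ MemSub (Set.range e) y ∧ y ≤ x)

include hfree in
lemma A_ne_bot' {p : Finset ι × Finset ι} (h : Disjoint p.1 p.2) : A e p ≠ ⊥ :=
  (hfree p.1 p.2 h).ne'

include hfree in
lemma subset_of_A_le {p q : Finset ι × Finset ι} (hp : Disjoint p.1 p.2)
    (h : A e p ≤ A e q) : q.1 ⊆ p.1 ∧ q.2 ⊆ p.2 := by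
  constructor <;> intro γ hγ
  · by_contra hc
    have hγ2 : γ ∉ p.2 := by
      intro h2
      have : A e p ≤ e γ ⊓ (e γ)ᶜ :=
        le_inf (h.trans (A_le_fst e hγ)) (A_le_snd e h2)
      rw [inf_compl_eq_bot, le_bot_iff] at this
      exact A_ne_bot' hfree hp this
    have hd : Disjoint p.1 (insert γ p.2) := by
      rw [Finset.disjoint_insert_right]
      exact ⟨hc, hp⟩
    have hne := A_ne_bot' hfree (p := (p.1, insert γ p.2)) hd
    apply hne
    have heq : A e (p.1, insert γ p.2) = A e p ⊓ (e γ)ᶜ := by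
      simp only [A, Finset.inf_insert]
      rw [inf_comm ((e γ)ᶜ) (p.2.inf fun t => (e t)ᶜ), ← inf_assoc]
    rw [heq, ← le_bot_iff]
    calc A e p ⊓ (e γ)ᶜ ≤ e γ ⊓ (e γ)ᶜ :=
      inf_le_inf_right _ (h.trans (A_le_fst e hγ))
    _ = ⊥ := inf_compl_eq_bot
  · by_contra hc
    have hγ1 : γ ∉ p.1 := by
      intro h1
      have : A e p ≤ e γ ⊓ (e γ)ᶜ :=
        le_inf (A_le_fst e h1) (h.trans (A_le_snd e hγ))
      rw [inf_compl_eq_bot, le_bot_iff] at this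
      exact A_ne_bot' hfree hp this
    have hd : Disjoint (insert γ p.1) p.2 := by
      rw [Finset.disjoint_insert_left]
      exact ⟨hc, hp⟩
    have hne := A_ne_bot' hfree (p := (insert γ p.1, p.2)) hd
    apply hne
    have heq : A e (insert γ p.1, p.2) = e γ ⊓ A e p := by
      simp only [A, Finset.inf_insert]
      rw [inf_assoc]
    rw [heq, ← le_bot_iff]
    calc e γ ⊓ A e p ≤ e γ ⊓ (e γ)ᶜ :=
      inf_le_inf_left _ (h.trans (A_le_snd e hγ))
    _ = ⊥ := inf_compl_eq_bot

include hdense in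
lemma rep (x : B) : sSup {y | ∃ p : Finset ι × Finset ι,
    Disjoint p.1 p.2 ∧ A e p ≤ x ∧ y = A e p} = x := by
  apply le_antisymm
  · exact sSup_le fun y ⟨p, _, hle, hy⟩ => hy ▸ hle
  · by_contra hc
    set s := sSup {y | ∃ p : Finset ι × Finset ι,
      Disjoint p.1 p.2 ∧ A e p ≤ x ∧ y = A e p} with hs
    have hne : x ⊓ sᶜ ≠ ⊥ := by
      intro h
      exact hc (disjoint_compl_right_iff.mp (disjoint_iff.mpr h))
    obtain ⟨y, hy0, hysub, hyle⟩ := hdense _ hne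
    obtain ⟨t, rfl⟩ := memSub_rep hysub
    have hex : ∃ p ∈ t, A e p ≠ ⊥ := by
      by_contra hall
      push_neg at hall
      exact hy0 (le_bot_iff.mp (Finset.sup_le fun p hp => le_bot_iff.mpr (hall p hp)))
    obtain ⟨p, hpt, hp0⟩ := hex
    have hdisj : Disjoint p.1 p.2 := by
      by_contra h
      exact hp0 (A_eq_bot e h)
    have hle : A e p ≤ t.sup (A e) := Finset.le_sup hpt
    have hlex : A e p ≤ x := hle.trans (hyle.trans inf_le_left)
    have h1 : A e p ≤ s := le_sSup ⟨p, hdisj, hlex, rfl⟩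
    have h2 : A e p ≤ sᶜ := hle.trans (hyle.trans inf_le_right)
    exact hp0 (le_bot_iff.mp (by calc A e p ≤ s ⊓ sᶜ := le_inf h1 h2
      _ = ⊥ := inf_compl_eq_bot))

include hdense in
lemma exists_elem_le {x : B} (hx : x ≠ ⊥) :
    ∃ p : Finset ι × Finset ι, Disjoint p.1 p.2 ∧ A e p ≤ x := by
  by_contra h
  push_neg at h
  apply hx
  rw [← rep hdense x]
  have hemp : {y | ∃ p : Finset ι × Finset ι,
      Disjoint p.1 p.2 ∧ A e p ≤ x ∧ y = A e p} = ∅ := by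
    ext y
    simp only [Set.mem_setOf_eq, Set.mem_empty_iff_false, iff_false]
    rintro ⟨p, hd, hle, rfl⟩
    exact (h p hd).elim hle
  rw [hemp, sSup_empty]

/-- the involution of `B` flipping the generator `e β` -/
def FM (e : ι → B) (β : ι) (x : B) : B :=
  sSup {y | ∃ p : Finset ι × Finset ι, Disjoint p.1 p.2 ∧ A e p ≤ x ∧ y = A e (flp β p)}

lemma le_FM {β : ι} {x : B} {p : Finset ι × Finset ι} (hd : Disjoint p.1 p.2)
    (h : A e p ≤ x) : A e (flp β p) ≤ FM e β x :=
  le_sSup ⟨p, hd, h, rfl⟩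

lemma FM_mono {β : ι} {x y : B} (h : x ≤ y) : FM e β x ≤ FM e β y :=
  sSup_le fun _ ⟨p, hd, hle, hz⟩ => hz ▸ le_FM hd (hle.trans h)

include hfree hdense in
lemma FM_FM {β : ι} (x : B) : FM e β (FM e β x) = x := by
  apply le_antisymm
  · apply sSup_le
    rintro _ ⟨q, hq, hqle, rfl⟩
    by_contra hc
    have hne : A e (flp β q) ⊓ xᶜ ≠ ⊥ := by
      intro h
      exact hc (disjoint_compl_right_iff.mp (disjoint_iff.mpr h))
    obtain ⟨r, hr, hrle⟩ := exists_elem_le hdense hne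
    have hrq : A e r ≤ A e (flp β q) := hrle.trans inf_le_left
    obtain ⟨hs1, hs2⟩ := subset_of_A_le hfree hr hrq
    have hm := flp_mono (β := β) hs1 hs2
    rw [flp_flp] at hm
    have hfr : A e (flp β r) ≤ A e q := A_mono e hm.1 hm.2
    have hfr2 : A e (flp β r) ≤ FM e β x := hfr.trans hqle
    have hfrne : A e (flp β r) ≠ ⊥ := A_ne_bot' hfree (flp_disjoint hr)
    have hact := inf_sSup_eq (a := A e (flp β r))
      (s := {y | ∃ p : Finset ι × Finset ι, Disjoint p.1 p.2 ∧ A e p ≤ x ∧ y = A e (flp β p)})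
    rw [show A e (flp β r) ⊓ sSup _ = A e (flp β r) from inf_eq_left.mpr hfr2] at hact
    have hex : ∃ p : Finset ι × Finset ι, Disjoint p.1 p.2 ∧ A e p ≤ x ∧
        A e (flp β r) ⊓ A e (flp β p) ≠ ⊥ := by
      by_contra hall
      push_neg at hall
      apply hfrne
      rw [hact, ← le_bot_iff]
      apply iSup₂_le
      rintro y ⟨p, hd, hle, rfl⟩
      exact le_bot_iff.mpr (hall p hd hle)
    obtain ⟨p, hp, hple, hne2⟩ := hex
    have hcomp : A e r ⊓ A e p ≠ ⊥ := by
      intro h0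
      apply hne2
      rw [A_inf, ← flp_union]
      apply A_eq_bot
      rw [flp_disjoint_iff]
      intro hd0
      exact A_ne_bot' hfree (p := (r.1 ∪ p.1, r.2 ∪ p.2)) hd0 (by rw [← A_inf]; exact h0)
    apply hcomp
    rw [← le_bot_iff]
    calc A e r ⊓ A e p ≤ xᶜ ⊓ x :=
      inf_le_inf (hrle.trans inf_le_right) hple
    _ = ⊥ := compl_inf_eq_bot
  · conv_lhs => rw [← rep hdense x]
    apply sSup_le
    rintro _ ⟨p, hp, hple, rfl⟩
    have h1 : A e (flp β p) ≤ FM e β x := le_FM hp hple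
    have h2 := le_FM (β := β) (flp_disjoint hp) h1
    rwa [flp_flp] at h2

include hfree hdense in
lemma FM_adj {β : ι} {x y : B} : FM e β x ≤ y ↔ x ≤ FM e β y := by
  constructor
  · intro h
    have := FM_mono (e := e) (β := β) h
    rwa [FM_FM hfree hdense] at this
  · intro h
    have := FM_mono (e := e) (β := β) h
    rwa [FM_FM hfree hdense] at this

include hfree hdense in
lemma FM_compl {β : ι} (x : B) : FM e β xᶜ = (FM e β x)ᶜ := by
  have key : ∀ z : B, FM e β zᶜ ≤ (FM e β z)ᶜ := by
    intro z
    rw [le_compl_iff_disjoint_left, disjoint_iff]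
    unfold FM
    rw [sSup_inf_sSup, ← le_bot_iff]
    apply iSup₂_le
    rintro ⟨a, b⟩ ⟨⟨p, hp, hple, rfl⟩, ⟨q, hq, hqle, rfl⟩⟩
    simp only
    rw [le_bot_iff, A_inf, ← flp_union]
    apply A_eq_bot
    rw [flp_disjoint_iff]
    intro hd0
    have h0 : A e p ⊓ A e q ≠ ⊥ := by
      rw [A_inf]
      exact A_ne_bot' hfree hd0
    apply h0
    rw [← le_bot_iff]
    calc A e p ⊓ A e q ≤ z ⊓ zᶜ := inf_le_inf hple hqle
    _ = ⊥ := inf_compl_eq_bot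
  apply le_antisymm (key x)
  have h1 : FM e β ((FM e β x)ᶜ) ≤ xᶜ := by
    have := key (FM e β x)
    rwa [FM_FM hfree hdense] at this
  have h2 := FM_mono (e := e) (β := β) h1
  rwa [FM_FM hfree hdense] at h2

include hfree hdense in
lemma FM_e {α β : ι} (h : α ≠ β) : FM e β (e α) = e α := by
  have hle : FM e β (e α) ≤ e α := by
    apply sSup_le
    rintro _ ⟨p, hp, hple, rfl⟩
    have heα : e α = A e ({α}, ∅) := by simp [A]
    have hsub := subset_of_A_le hfree hp (q := ({α}, ∅)) (by rw [← heα]; exact hple)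
    have hα1 : α ∈ p.1 := hsub.1 (Finset.mem_singleton_self α)
    have hαf : α ∈ (flp β p).1 := mem_flp_fst.mpr (Or.inl ⟨hα1, h⟩)
    exact le_trans inf_le_left (Finset.inf_le hαf)
  apply le_antisymm hle
  rw [← FM_adj hfree hdense]
  exact hle

include hfree hdense in
lemma FM_fix {J : Set ι} {β : ι} (hβ : β ∉ J) {x : B}
    (hx : MemCompleteSub (e '' J) x) : FM e β x = x := by
  apply hx {z | FM e β z = z}
  · rintro _ ⟨α, hα, rfl⟩
    exact FM_e hfree hdense (fun hc => hβ (hc ▸ hα))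
  · intro u hu
    have hub : sSup u ≤ FM e β (sSup u) := by
      apply sSup_le
      intro z hz
      rw [← FM_adj hfree hdense, hu hz]
      exact le_sSup hz
    apply le_antisymm _ hub
    rw [FM_adj hfree hdense]
    exact hub
  · intro u hu
    have hlb : FM e β (sInf u) ≤ sInf u := by
      apply le_sInf
      intro z hz
      rw [FM_adj hfree hdense, hu hz]
      exact sInf_le hz
    apply le_antisymm hlb
    rw [← FM_adj hfree hdense]
    exact hlb
  · intro a ha
    rw [Set.mem_setOf_eq] at ha ⊢
    rw [FM_compl hfree hdense, ha]

include hfree hdense in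
lemma main_free {J : Set ι} {x : B} (hx : MemCompleteSub (e '' J) x) (hx0 : x ≠ ⊥)
    {u : Finset ι} (hu : ∀ β ∈ u, β ∉ J) : u.inf e ⊓ x ≠ ⊥ := by
  obtain ⟨p, hp, hple⟩ := exists_elem_le hdense hx0
  have key : ∀ n (q : Finset ι × Finset ι), (q.2 ∩ u).card = n →
      Disjoint q.1 q.2 → A e q ≤ x →
      ∃ r : Finset ι × Finset ι, Disjoint r.1 r.2 ∧ A e r ≤ x ∧ r.2 ∩ u = ∅ := by
    intro n
    induction n with
    | zero =>
      intro q hcard hq hqle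
      exact ⟨q, hq, hqle, Finset.card_eq_zero.mp hcard⟩
    | succ n ih =>
      intro q hcard hq hqle
      have hne : (q.2 ∩ u).Nonempty := by
        rw [← Finset.card_pos, hcard]; omega
      obtain ⟨β, hβ⟩ := hne
      rw [Finset.mem_inter] at hβ
      have hflp : A e (flp β q) ≤ FM e β x := le_FM hq hqle
      rw [FM_fix hfree hdense (hu β hβ.2) hx] at hflp
      apply ih (flp β q) _ (flp_disjoint hq) hflp
      have h2 : (flp β q).2 = q.2.erase β := by
        ext γ
        rw [mem_flp_snd, Finset.mem_erase]
        constructor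
        · rintro (⟨h1', h2'⟩ | ⟨h1', rfl⟩)
          · exact ⟨h2', h1'⟩
          · exact absurd hβ.1 (Finset.disjoint_left.mp hq h1')
        · rintro ⟨h1', h2'⟩; exact Or.inl ⟨h2', h1'⟩
      have hE : (flp β q).2 ∩ u = (q.2 ∩ u).erase β := by
        rw [h2]
        ext γ
        simp only [Finset.mem_inter, Finset.mem_erase]
        tauto
      rw [hE, Finset.card_erase_of_mem (Finset.mem_inter.mpr hβ), hcard]
      omega
  obtain ⟨r, hr, hrle, hru⟩ := key _ p rfl hp hple
  intro hbot
  have hd : Disjoint (u ∪ r.1) r.2 := by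
    rw [Finset.disjoint_union_left]
    refine ⟨?_, hr⟩
    rw [Finset.disjoint_left]
    intro γ hγ1 hγ2
    have hmem : γ ∈ r.2 ∩ u := Finset.mem_inter.mpr ⟨hγ2, hγ1⟩
    rw [hru] at hmem
    exact absurd hmem (Finset.notMem_empty γ)
  apply A_ne_bot' hfree (p := (u ∪ r.1, r.2)) hd
  rw [← le_bot_iff, ← hbot]
  have heq : A e (u ∪ r.1, r.2) = u.inf e ⊓ A e r := by
    simp only [A, Finset.inf_union, inf_assoc]
  rw [heq]
  exact inf_le_inf_left _ hrle

end Stmt14Aux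

/-- Shelah [Sh:906], ⊛₃/⊛₄ of the proof of Theorem 2.9: in the completion `B^c_λ` of
the free Boolean algebra on independent generators `⟨e_α : α < λ⟩` (a complete Boolean
algebra completely generated by `e`, in which the subalgebra generated by `e` is
dense), given an ultrafilter `D_*` containing no generator, for every `η : λ → 2`
there is an ultrafilter `D_η` with `e_α ∈ D_η ↔ η(α) = 1`, containing every member of
`D_*` lying in the complete subalgebra generated by `{e_α : η(α) = 0}`; moreover if
`η ≡ 0` then `D_η = D_*`. -/


theorem stmt14 (ι B : Type*) [CompleteBooleanAlgebra B] (e : ι → B)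
    (hfree : ∀ u v : Finset ι, Disjoint u v →
      ⊥ < u.inf e ⊓ v.inf fun t => (e t)ᶜ)
    (hgen : ∀ x : B, MemCompleteSub (Set.range e) x)
    (hdense : ∀ x : B, x ≠ ⊥ → ∃ y, y ≠ ⊥ ∧ MemSub (Set.range e) y ∧ y ≤ x)
    (Dst : Set B) (hDst : IsUltra Dst) (hDe : ∀ α, e α ∉ Dst)
    (η : ι → Bool) :
    ∃ D : Set B, IsUltra D ∧
      (∀ x ∈ Dst, MemCompleteSub (e '' {α | η α = false}) x → x ∈ D) ∧
      (∀ α, e α ∈ D ↔ η α = true) ∧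
      ((∀ α, η α = false) → D = Dst) := by
  classical
  by_cases hall : ∀ α, η α = false
  · refine ⟨Dst, hDst, fun x hx _ => hx, ?_, fun _ => rfl⟩
    intro α
    constructor
    · intro h; exact absurd h (hDe α)
    · intro h; rw [hall α] at h; exact absurd h (by simp)
  · obtain ⟨hT, hB, hUp, hInf, hUl⟩ := hDst
    set J : Set ι := {α | η α = false} with hJ
    set S : Set B := {x | MemCompleteSub (e '' J) x} with hS
    have hStop : (⊤ : B) ∈ S := by
      intro t hsub hsup hinf hcompl
      have := hinf ∅ (Set.empty_subset t)
      rwa [sInf_empty] at this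
    have hSinf : ∀ x ∈ S, ∀ y ∈ S, x ⊓ y ∈ S := by
      intro x hx y hy t hsub hsup hinf hcompl
      have hxt := hx t hsub hsup hinf hcompl
      have hyt := hy t hsub hsup hinf hcompl
      have := hinf {x, y} (by rintro z (rfl | rfl) <;> assumption)
      rwa [sInf_pair] at this
    have hScompl : ∀ x ∈ S, xᶜ ∈ S := by
      intro x hx t hsub hsup hinf hcompl
      exact hcompl x (hx t hsub hsup hinf hcompl)
    have hSe : ∀ α, η α = false → e α ∈ S := by
      intro α hα t hsub _ _ _
      exact hsub ⟨α, hα, rfl⟩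
    set G : Set B := {y | ∃ d, (d ∈ Dst ∧ d ∈ S) ∧ ∃ u : Finset ι,
      (∀ β ∈ u, η β = true) ∧ d ⊓ u.inf e ≤ y} with hG
    have hGtop : (⊤ : B) ∈ G := ⟨⊤, ⟨hT, hStop⟩, ∅, by simp, by simp⟩
    have hGbot : ⊥ ∉ G := by
      rintro ⟨d, ⟨hdD, hdS⟩, u, hu, hle⟩
      have hd0 : d ≠ ⊥ := fun h => hB (h ▸ hdD)
      have hu' : ∀ β ∈ u, β ∉ J := by
        intro β hβ hβJ
        rw [hJ] at hβJ
        simp only [Set.mem_setOf_eq] at hβJ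
        rw [hu β hβ] at hβJ
        exact absurd hβJ (by simp)
      apply Stmt14Aux.main_free hfree hdense hdS hd0 hu'
      rw [← le_bot_iff, inf_comm]
      exact hle
    have hGup : ∀ a ∈ G, ∀ b, a ≤ b → b ∈ G := by
      rintro a ⟨d, hd, u, hu, hle⟩ b hab
      exact ⟨d, hd, u, hu, hle.trans hab⟩
    have hGinf : ∀ a ∈ G, ∀ b ∈ G, a ⊓ b ∈ G := by
      rintro a ⟨d1, ⟨h1D, h1S⟩, u1, hu1, hle1⟩ b ⟨d2, ⟨h2D, h2S⟩, u2, hu2, hle2⟩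
      refine ⟨d1 ⊓ d2, ⟨hInf d1 h1D d2 h2D, hSinf d1 h1S d2 h2S⟩, u1 ∪ u2, ?_, ?_⟩
      · intro β hβ
        rcases Finset.mem_union.mp hβ with h | h
        · exact hu1 β h
        · exact hu2 β h
      · rw [Finset.inf_union]
        calc d1 ⊓ d2 ⊓ (u1.inf e ⊓ u2.inf e)
            = d1 ⊓ u1.inf e ⊓ (d2 ⊓ u2.inf e) := inf_inf_inf_comm _ _ _ _
        _ ≤ a ⊓ b := inf_le_inf hle1 hle2
    set C : Set (Set B) := {Fl | G ⊆ Fl ∧ ⊥ ∉ Fl ∧ (∀ a ∈ Fl, ∀ b, a ≤ b → b ∈ Fl) ∧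
      (∀ a ∈ Fl, ∀ b ∈ Fl, a ⊓ b ∈ Fl)} with hC
    have hGC : G ∈ C := ⟨subset_rfl, hGbot, hGup, hGinf⟩
    have hchain : ∀ c ⊆ C, IsChain (· ⊆ ·) c → c.Nonempty → ∃ ub ∈ C, ∀ s ∈ c, s ⊆ ub := by
      rintro c hcC hch ⟨s0, hs0⟩
      refine ⟨⋃₀ c, ⟨?_, ?_, ?_, ?_⟩, fun s hs => Set.subset_sUnion_of_mem hs⟩
      · exact ((hcC hs0).1).trans (Set.subset_sUnion_of_mem hs0)
      · rintro ⟨s, hs, hbs⟩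
        exact (hcC hs).2.1 hbs
      · rintro a ⟨s, hs, has⟩ b hab
        exact ⟨s, hs, (hcC hs).2.2.1 a has b hab⟩
      · rintro a ⟨s1, hs1, ha⟩ b ⟨s2, hs2, hb⟩
        rcases hch.total hs1 hs2 with h | h
        · exact ⟨s2, hs2, (hcC hs2).2.2.2 a (h ha) b hb⟩
        · exact ⟨s1, hs1, (hcC hs1).2.2.2 a ha b (h hb)⟩
    obtain ⟨M, hGM, hMmax⟩ := zorn_subset_nonempty C hchain G hGC
    obtain ⟨hGM', hMbot, hMup, hMinf⟩ := hMmax.prop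
    have hMtop : (⊤ : B) ∈ M := hGM hGtop
    have hMul : ∀ a : B, a ∈ M ∨ aᶜ ∈ M := by
      intro a
      by_contra hcon
      push_neg at hcon
      obtain ⟨ha, hac⟩ := hcon
      set M1 : Set B := {y | ∃ m ∈ M, m ⊓ a ≤ y} with hM1
      have hMM1 : M ⊆ M1 := fun y hy => ⟨y, hy, inf_le_left⟩
      have haM1 : a ∈ M1 := ⟨⊤, hMtop, by simp⟩
      have hM1bot : ⊥ ∉ M1 := by
        rintro ⟨m, hm, hle⟩
        have hmac : m ≤ aᶜ := by
          rw [le_compl_iff_disjoint_right, disjoint_iff]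
          exact le_bot_iff.mp hle
        exact hac (hMup m hm aᶜ hmac)
      have hM1C : M1 ∈ C := by
        refine ⟨hGM.trans hMM1, hM1bot, ?_, ?_⟩
        · rintro x ⟨m, hm, hle⟩ b hxb
          exact ⟨m, hm, hle.trans hxb⟩
        · rintro x ⟨m1, hm1, hle1⟩ y ⟨m2, hm2, hle2⟩
          refine ⟨m1 ⊓ m2, hMinf m1 hm1 m2 hm2, ?_⟩
          calc m1 ⊓ m2 ⊓ a ≤ (m1 ⊓ a) ⊓ (m2 ⊓ a) :=
            le_inf (inf_le_inf_right a inf_le_left) (inf_le_inf_right a inf_le_right)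
          _ ≤ x ⊓ y := inf_le_inf hle1 hle2
      exact ha (hMmax.2 hM1C hMM1 haM1)
    refine ⟨M, ⟨hMtop, hMbot, hMup, hMinf, hMul⟩, ?_, ?_, ?_⟩
    · intro x hx hxsub
      exact hGM ⟨x, ⟨hx, hxsub⟩, ∅, by simp, by simp⟩
    · intro α
      constructor
      · intro hα
        cases hηα : η α with
        | true => rfl
        | false =>
          have h1 : (e α)ᶜ ∈ Dst := by
            rcases hUl (e α) with h | h
            · exact absurd h (hDe α)
            · exact h
          have h2 : (e α)ᶜ ∈ S := hScompl _ (hSe α hηα)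
          have h3 : (e α)ᶜ ∈ M := hGM ⟨(e α)ᶜ, ⟨h1, h2⟩, ∅, by simp, by simp⟩
          have h4 : (⊥ : B) ∈ M := by
            have := hMinf _ hα _ h3
            rwa [inf_compl_eq_bot] at this
          exact absurd h4 hMbot
      · intro hα
        apply hGM
        refine ⟨⊤, ⟨hT, hStop⟩, {α}, ?_, ?_⟩
        · intro β hβ; rw [Finset.mem_singleton] at hβ; rwa [hβ]
        · simp
    · intro h; exact absurd h hall
end
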